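/- arXiv:2402.08520 — 5 statements merged into one kernel-verified Lean document; each statement's English description precedes it below -/
import Mathlib

section
/- Let 0 < α ≤ 1 and let f : [0,1] → ℝ be α-Hölder. Let μ be the pushforward of Lebesgue measure on [0,1] under f (i.e., μ = f_* L¹|[0,1]). Then for every y in the image f([0,1]), the upper Minkowski dimension of the level set f⁻¹({y}) satisfies dim_M̄(f⁻¹({y})) ≤ 1 - α · d, where d = liminf_{r→0} log μ(B(y,r)) / log r is the lower local dimension of μ at y. -/
open MeasureTheory Set Filter
open scoped ENNReal

/-- The maximal number of points of `A` that are centers of pairwise disjoint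
open `r`-balls (the packing number). -/
noncomputable def packingNum {X : Type*} [MetricSpace X] (A : Set X) (r : ℝ) : ℕ :=
  sSup {n : ℕ | ∃ s : Finset X, ↑s ⊆ A ∧ s.card = n ∧
    (s : Set X).PairwiseDisjoint (fun x => Metric.ball x r)}

/-- Upper Minkowski (box) dimension defined via packings. -/
noncomputable def upperMinkowski {X : Type*} [MetricSpace X] (A : Set X) : ℝ :=
  limsup (fun r : ℝ => Real.log (packingNum A r) / (-Real.log r)) (nhdsWithin 0 (Ioi 0))

/-- Lower local (pointwise) dimension of a measure at a point, as an extended real,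
with the convention that it is `+∞` if small balls have measure zero. -/
noncomputable def lowerLocalDim (μ : Measure ℝ) (y : ℝ) : EReal :=
  liminf (fun r : ℝ => ENNReal.log (μ (Metric.ball y r)) / (Real.log r : EReal))
    (nhdsWithin 0 (Ioi 0))

lemma sum_bound {r : ℝ} (hr : 0 < r) (hr1 : r ≤ 1) {s : Finset ℝ}
    (hs : (s : Set ℝ) ⊆ Icc (0:ℝ) 1)
    (hd : (s : Set ℝ).PairwiseDisjoint (fun x => Metric.ball x r)) :
    (s.card : ℝ≥0∞) * ENNReal.ofReal r ≤ volume (⋃ x ∈ s, Metric.ball x r ∩ Icc (0:ℝ) 1) := by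
  have hmeas : ∀ x ∈ s, MeasurableSet (Metric.ball x r ∩ Icc (0:ℝ) 1) :=
    fun x _ => measurableSet_ball.inter measurableSet_Icc
  have hd' : (s : Set ℝ).PairwiseDisjoint (fun x => Metric.ball x r ∩ Icc (0:ℝ) 1) :=
    hd.mono_on (fun x _ => inter_subset_left)
  rw [measure_biUnion_finset hd' hmeas]
  have hlow : ∀ x ∈ s, ENNReal.ofReal r ≤ volume (Metric.ball x r ∩ Icc (0:ℝ) 1) := by
    intro x hx
    have hx01 : x ∈ Icc (0:ℝ) 1 := hs hx
    have hsub : Ioo (max (x - r) 0) (min (x + r) 1) ⊆ Metric.ball x r ∩ Icc (0:ℝ) 1 := by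
      intro u hu
      constructor
      · rw [Real.ball_eq_Ioo]
        exact ⟨lt_of_le_of_lt (le_max_left _ _) hu.1, lt_of_lt_of_le hu.2 (min_le_left _ _)⟩
      · exact ⟨le_of_lt (lt_of_le_of_lt (le_max_right _ _) hu.1),
          le_of_lt (lt_of_lt_of_le hu.2 (min_le_right _ _))⟩
    calc ENNReal.ofReal r ≤ volume (Ioo (max (x - r) 0) (min (x + r) 1)) := by
          rw [Real.volume_Ioo]
          apply ENNReal.ofReal_le_ofReal
          obtain ⟨hx0, hx1⟩ := hx01
          rcases le_total (x - r) 0 with h | h <;> rcases le_total (x + r) 1 with h' | h' <;>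
            simp [max_eq_left, max_eq_right, min_eq_left, min_eq_right, h, h'] <;> linarith
      _ ≤ volume (Metric.ball x r ∩ Icc (0:ℝ) 1) := measure_mono hsub
  calc (s.card : ℝ≥0∞) * ENNReal.ofReal r = ∑ _x ∈ s, ENNReal.ofReal r := by
        rw [Finset.sum_const, nsmul_eq_mul]
    _ ≤ ∑ x ∈ s, volume (Metric.ball x r ∩ Icc (0:ℝ) 1) := Finset.sum_le_sum hlow

lemma pack_spec {A : Set ℝ} (hA : A ⊆ Icc (0:ℝ) 1) (hne : A.Nonempty) {r : ℝ}
    (hr : 0 < r) (hr1 : r ≤ 1) :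
    1 ≤ packingNum A r ∧ ∃ s : Finset ℝ, (s : Set ℝ) ⊆ A ∧ s.card = packingNum A r ∧
      (s : Set ℝ).PairwiseDisjoint (fun x => Metric.ball x r) := by
  set T := {n : ℕ | ∃ s : Finset ℝ, ↑s ⊆ A ∧ s.card = n ∧
    (s : Set ℝ).PairwiseDisjoint (fun x => Metric.ball x r)} with hT
  obtain ⟨x₀, hx₀⟩ := hne
  have h1 : 1 ∈ T := by
    refine ⟨{x₀}, by simp [hx₀], by simp, by simp⟩
  have hbdd : BddAbove T := by
    refine ⟨Nat.ceil (1/r), fun n hn => ?_⟩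
    obtain ⟨s, hsA, hcard, hd⟩ := hn
    have h1 : (s.card : ℝ≥0∞) * ENNReal.ofReal r ≤ 1 := by
      refine le_trans (sum_bound hr hr1 (hsA.trans hA) hd) ?_
      have hsub : (⋃ x ∈ s, Metric.ball x r ∩ Icc (0:ℝ) 1) ⊆ Icc (0:ℝ) 1 :=
        iUnion₂_subset (fun x _ => inter_subset_right)
      refine le_trans (measure_mono hsub) ?_
      rw [Real.volume_Icc]; simp
    have h2 : (s.card : ℝ) * r ≤ 1 := by
      have := ENNReal.toReal_mono (by simp) h1
      simpa [ENNReal.toReal_ofReal hr.le] using this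
    have h3 : (n : ℝ) ≤ 1 / r := by
      rw [le_div_iff₀ hr]; rw [hcard] at h2; linarith
    exact_mod_cast h3.trans (Nat.le_ceil _)
  have hmem : packingNum A r ∈ T := Nat.sSup_mem ⟨1, h1⟩ hbdd
  obtain ⟨s, hsA, hcard, hd⟩ := hmem
  exact ⟨le_csSup hbdd h1, s, hsA, hcard, hd⟩

theorem stmt_1 (α C : ℝ) (hα : 0 < α) (hα1 : α ≤ 1) (hC : 0 < C)
    (f : ℝ → ℝ) (hf : ∀ x ∈ Icc (0:ℝ) 1, ∀ z ∈ Icc (0:ℝ) 1, |f x - f z| ≤ C * |x - z| ^ α)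
    (μ : Measure ℝ) (hμ : μ = Measure.map f (volume.restrict (Icc (0:ℝ) 1)))
    (y : ℝ) (hy : y ∈ f '' Icc (0:ℝ) 1) :
    (upperMinkowski (f ⁻¹' {y} ∩ Icc (0:ℝ) 1) : EReal) ≤
      1 - (α : EReal) * lowerLocalDim μ y := by
  obtain ⟨x₀, hx₀, hfx₀⟩ := hy
  set E : Set ℝ := f ⁻¹' {y} ∩ Icc (0:ℝ) 1 with hE
  have hEsub : E ⊆ Icc (0:ℝ) 1 := inter_subset_right
  have hEne : E.Nonempty := ⟨x₀, by simp [hE, hfx₀], hx₀⟩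
  -- continuity of f on [0,1]
  have hcont : ContinuousOn f (Icc (0:ℝ) 1) := by
    intro x hx
    rw [Metric.continuousWithinAt_iff]
    intro ε hε
    refine ⟨(ε/(2*C))^(α⁻¹), by positivity, fun u hu hdu => ?_⟩
    have h1 : |f u - f x| ≤ C * |u - x| ^ α := hf u hu x hx
    have h2 : |u - x| ^ α ≤ ((ε/(2*C))^(α⁻¹)) ^ α := by
      apply Real.rpow_le_rpow (abs_nonneg _) _ hα.le
      simpa [Real.dist_eq] using hdu.le
    rw [Real.rpow_inv_rpow (by positivity) hα.ne'] at h2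
    have : C * |u - x| ^ α ≤ C * (ε/(2*C)) := by nlinarith
    rw [Real.dist_eq]
    calc |f u - f x| ≤ C * (ε/(2*C)) := h1.trans this
      _ = ε / 2 := by field_simp
      _ < ε := by linarith
  have haem : AEMeasurable f (volume.restrict (Icc (0:ℝ) 1)) :=
    hcont.aemeasurable measurableSet_Icc
  have hμap : ∀ t : ℝ, μ (Metric.ball y t) = volume (f ⁻¹' Metric.ball y t ∩ Icc (0:ℝ) 1) := by
    intro t
    rw [hμ, Measure.map_apply_of_aemeasurable haem measurableSet_ball,
      Measure.restrict_apply' measurableSet_Icc]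
  have hμ1 : ∀ t : ℝ, μ (Metric.ball y t) ≤ 1 := by
    intro t
    rw [hμap t]
    refine le_trans (measure_mono inter_subset_right) ?_
    rw [Real.volume_Icc]; simp
  -- key measure inequality
  have hkey : ∀ r : ℝ, 0 < r → r ≤ 1 →
      (packingNum E r : ℝ≥0∞) * ENNReal.ofReal r ≤ μ (Metric.ball y (2*C*r^α)) := by
    intro r hr hr1
    obtain ⟨_, s, hsE, hcard, hd⟩ := pack_spec hEsub hEne hr hr1
    have hsub : (⋃ x ∈ s, Metric.ball x r ∩ Icc (0:ℝ) 1) ⊆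
        f ⁻¹' Metric.ball y (2*C*r^α) ∩ Icc (0:ℝ) 1 := by
      intro u hu
      simp only [mem_iUnion] at hu
      obtain ⟨x, hxs, hux, hu01⟩ := hu
      have hxE : x ∈ E := hsE hxs
      refine ⟨?_, hu01⟩
      have h1 : |f u - f x| ≤ C * |u - x| ^ α := hf u hu01 x (hEsub hxE)
      have h2 : |u - x| < r := by simpa [Real.dist_eq] using hux
      have h3 : |u - x| ^ α ≤ r ^ α := Real.rpow_le_rpow (abs_nonneg _) h2.le hα.le
      have h4 : C * |u - x| ^ α ≤ C * r ^ α := by nlinarith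
      have h5 : f x = y := hxE.1
      have hpos : 0 < C * r ^ α := by positivity
      simp only [mem_preimage, Metric.mem_ball, Real.dist_eq]
      calc |f u - y| = |f u - f x| := by rw [h5]
        _ ≤ C * r ^ α := h1.trans h4
        _ < 2 * C * r ^ α := by nlinarith
    calc (packingNum E r : ℝ≥0∞) * ENNReal.ofReal r
        = (s.card : ℝ≥0∞) * ENNReal.ofReal r := by rw [hcard]
      _ ≤ volume (⋃ x ∈ s, Metric.ball x r ∩ Icc (0:ℝ) 1) :=
          sum_bound hr hr1 (hsE.trans hEsub) hd
      _ ≤ volume (f ⁻¹' Metric.ball y (2*C*r^α) ∩ Icc (0:ℝ) 1) := measure_mono hsub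
      _ = μ (Metric.ball y (2*C*r^α)) := (hμap _).symm
  -- main step: for each real d' below the liminf, the limsup is at most 1 - α d'
  have hmain : ∀ d' : ℝ, (d' : EReal) < lowerLocalDim μ y →
      upperMinkowski E ≤ 1 - α * d' := by
    intro d' hd'
    refine le_of_forall_pos_le_add (fun ε hε => ?_)
    have hd'ev : ∀ᶠ t in nhdsWithin (0:ℝ) (Ioi 0),
        (d' : EReal) < ENNReal.log (μ (Metric.ball y t)) / (Real.log t : EReal) :=
      eventually_lt_of_lt_liminf hd'
    have htend : Tendsto (fun r : ℝ => 2*C*r^α) (nhdsWithin 0 (Ioi 0)) (nhdsWithin 0 (Ioi 0)) := by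
      rw [tendsto_nhdsWithin_iff]
      constructor
      · have h1 : ContinuousAt (fun x : ℝ => x ^ α) 0 :=
          Real.continuousAt_rpow_const 0 α (Or.inr hα.le)
        have h2 : Tendsto (fun r : ℝ => r ^ α) (nhds 0) (nhds 0) := by
          have := h1.tendsto
          rwa [Real.zero_rpow hα.ne'] at this
        have h3 := h2.const_mul (2*C)
        rw [mul_zero] at h3
        exact h3.mono_left nhdsWithin_le_nhds
      · filter_upwards [self_mem_nhdsWithin] with r hr
        have : (0:ℝ) < r := hr
        exact mem_Ioi.mpr (by positivity)
    have hd'ev2 : ∀ᶠ r in nhdsWithin (0:ℝ) (Ioi 0),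
        (d' : EReal) < ENNReal.log (μ (Metric.ball y (2*C*r^α))) /
          (Real.log (2*C*r^α) : EReal) := htend.eventually hd'ev
    set K : ℝ := |d' * Real.log (2*C)| with hK
    set M : ℝ := max 1 (K / ε) with hM
    set δ : ℝ := min 1 (min ((1/(2*C))^(α⁻¹)) (Real.exp (-M))) with hδ
    have hδpos : 0 < δ := by
      apply lt_min one_pos
      apply lt_min (by positivity) (Real.exp_pos _)
    have hIoo : Ioo (0:ℝ) δ ∈ nhdsWithin (0:ℝ) (Ioi 0) :=
      Ioo_mem_nhdsGT_of_mem ⟨le_refl 0, hδpos⟩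
    have hev : ∀ᶠ r in nhdsWithin (0:ℝ) (Ioi 0),
        Real.log (packingNum E r) / (-Real.log r) ≤ 1 - α * d' + ε := by
      filter_upwards [hd'ev2, hIoo] with r hd'r hrIoo
      obtain ⟨hr, hrδ⟩ := hrIoo
      have hr1 : r < 1 := lt_of_lt_of_le hrδ (min_le_left _ _)
      have hrδ1 : r < (1/(2*C))^(α⁻¹) :=
        lt_of_lt_of_le hrδ ((min_le_right _ _).trans (min_le_left _ _))
      have hrδ2 : r < Real.exp (-M) :=
        lt_of_lt_of_le hrδ ((min_le_right _ _).trans (min_le_right _ _))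
      set sr : ℝ := 2*C*r^α with hsr
      have hsr0 : 0 < sr := by positivity
      have hsr1 : sr < 1 := by
        have h1 : r ^ α < ((1/(2*C))^(α⁻¹)) ^ α := Real.rpow_lt_rpow hr.le hrδ1 hα
        rw [Real.rpow_inv_rpow (by positivity) hα.ne'] at h1
        calc sr < 2*C*(1/(2*C)) := by rw [hsr]; nlinarith
          _ = 1 := by field_simp
      have hlogr : Real.log r < 0 := Real.log_neg hr hr1
      have hρ : 0 < -Real.log r := by linarith
      have hρM : M ≤ -Real.log r := by
        have := Real.log_lt_log hr hrδ2
        rw [Real.log_exp] at this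
        linarith
      -- packing data
      obtain ⟨hN1, -⟩ := pack_spec hEsub hEne hr hr1.le
      set N : ℕ := packingNum E r with hNdef
      have hNμ := hkey r hr hr1.le
      have hμB1 : μ (Metric.ball y sr) ≤ 1 := hμ1 sr
      have hμBne : μ (Metric.ball y sr) ≠ ⊤ :=
        (lt_of_le_of_lt hμB1 ENNReal.one_lt_top).ne
      set m : ℝ := (μ (Metric.ball y sr)).toReal with hm
      have hNm : (N:ℝ) * r ≤ m := by
        have := ENNReal.toReal_mono hμBne hNμ
        simpa [ENNReal.toReal_mul, ENNReal.toReal_ofReal hr.le] using this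
      have hm0 : 0 < m := by
        have : (0:ℝ) < (N:ℝ) * r := by
          have : (1:ℝ) ≤ (N:ℝ) := by exact_mod_cast hN1
          nlinarith
        linarith
      have hm1 : m ≤ 1 := by
        have := ENNReal.toReal_mono (by simp) hμB1
        simpa using this
      -- translate the EReal inequality to reals
      have hlogsr : Real.log sr < 0 := Real.log_neg hsr0 hsr1
      have hloge : ENNReal.log (μ (Metric.ball y sr)) = ((Real.log m : ℝ) : EReal) := by
        apply ENNReal.log_pos_real'
        rw [← hm]; exact hm0
      have hd'real : d' < Real.log m / Real.log sr := by
        rw [hloge, ← EReal.coe_div] at hd'r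
        exact_mod_cast hd'r
      have hlm : Real.log m < d' * Real.log sr := (lt_div_iff_of_neg hlogsr).mp hd'real
      have hlogsr_eq : Real.log sr = Real.log (2*C) + α * Real.log r := by
        rw [hsr, Real.log_mul (by positivity) (by positivity), Real.log_rpow hr]
      -- log N bound
      have hNr0 : (0:ℝ) < (N:ℝ) * r := by
        have : (1:ℝ) ≤ (N:ℝ) := by exact_mod_cast hN1
        nlinarith
      have hlogN : Real.log N ≤ Real.log m - Real.log r := by
        have h1 : Real.log ((N:ℝ) * r) ≤ Real.log m := Real.log_le_log hNr0 hNm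
        rw [Real.log_mul (by positivity) hr.ne'] at h1
        linarith
      have hlogN2 : Real.log N < d' * (Real.log (2*C) + α * Real.log r) - Real.log r := by
        rw [← hlogsr_eq]; linarith
      -- divide
      have h5 : Real.log N / (-Real.log r) ≤
          (d' * (Real.log (2*C) + α * Real.log r) - Real.log r) / (-Real.log r) := by
        apply div_le_div_of_nonneg_right hlogN2.le hρ.le
      have h6 : (d' * (Real.log (2*C) + α * Real.log r) - Real.log r) / (-Real.log r)
          = 1 - α * d' + d' * Real.log (2*C) / (-Real.log r) := by
        have hlr0 : Real.log r ≠ 0 := ne_of_lt hlogr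
        field_simp
        ring
      have h7 : d' * Real.log (2*C) / (-Real.log r) ≤ ε := by
        rw [div_le_iff₀ hρ]
        have hK1 : K / ε ≤ M := le_max_right _ _
        have hK2 : K / ε ≤ -Real.log r := hK1.trans hρM
        have hK3 : K ≤ ε * (-Real.log r) := by
          rw [div_le_iff₀ hε] at hK2
          linarith [hK2]
        have : d' * Real.log (2*C) ≤ K := le_abs_self _
        linarith
      calc Real.log N / (-Real.log r)
          ≤ 1 - α * d' + d' * Real.log (2*C) / (-Real.log r) := by rw [← h6]; exact h5
        _ ≤ 1 - α * d' + ε := by linarith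
    have hnn : ∀ᶠ r in nhdsWithin (0:ℝ) (Ioi 0),
        (0:ℝ) ≤ Real.log (packingNum E r) / (-Real.log r) := by
      filter_upwards [Ioo_mem_nhdsGT_of_mem (show (0:ℝ) ∈ Ico (0:ℝ) 1 from ⟨le_refl 0, one_pos⟩)]
        with r hrIoo
      obtain ⟨hr, hr1⟩ := hrIoo
      obtain ⟨hN1, -⟩ := pack_spec hEsub hEne hr hr1.le
      have h1 : (0:ℝ) ≤ Real.log (packingNum E r) :=
        Real.log_nonneg (by exact_mod_cast hN1)
      have h2 : (0:ℝ) ≤ -Real.log r := by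
        have := Real.log_neg hr hr1; linarith
      exact div_nonneg h1 h2
    have hco : IsCoboundedUnder (· ≤ ·) (nhdsWithin (0:ℝ) (Ioi 0))
        (fun r : ℝ => Real.log (packingNum E r) / (-Real.log r)) :=
      isCoboundedUnder_le_of_eventually_le _ hnn
    exact limsup_le_of_le hco hev
  -- conclude by cases on the lower local dimension
  set d : EReal := lowerLocalDim μ y with hd
  clear_value d
  induction d using EReal.rec with
  | bot =>
      rw [EReal.mul_bot_of_pos (by exact_mod_cast hα : (0:EReal) < (α:EReal)),
        EReal.sub_bot (by rw [← EReal.coe_one]; exact EReal.coe_ne_bot 1)]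
      exact le_top
  | coe D =>
      have hL : upperMinkowski E ≤ 1 - α * D := by
        by_contra hcon
        push_neg at hcon
        have h1 : (1 - upperMinkowski E) / α < D := by
          rw [div_lt_iff₀ hα]
          nlinarith
        obtain ⟨d', hd'1, hd'2⟩ := exists_between h1
        have h2 := hmain d' (by exact_mod_cast hd'2)
        have h3 : 1 - α * d' < upperMinkowski E := by
          rw [div_lt_iff₀ hα] at hd'1
          nlinarith
        linarith
      have : ((1:ℝ) : EReal) - (α : EReal) * (D : EReal) = ((1 - α * D : ℝ) : EReal) := by
        rw [← EReal.coe_mul, ← EReal.coe_sub]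
      rw [← EReal.coe_one, this]
      exact_mod_cast hL
  | top =>
      exfalso
      have h1 := hmain ((1 - upperMinkowski E) / α + 1) (EReal.coe_lt_top _)
      have h2 : α * ((1 - upperMinkowski E) / α + 1) = 1 - upperMinkowski E + α := by
        field_simp
      rw [h2] at h1
      linarith
end

section
/- Let 0 < α ≤ 1 and let f : [0,1] → ℝ be α-Hölder. Let μ = f_* L¹|[0,1]. If the lower local dimension of μ at y is at least 1 for every y ∈ f([0,1]), then every level set f⁻¹({y}) has upper Minkowski dimension at most 1 - α. -/
open MeasureTheory Set Filter

lemma aux_ball_vol (x r : ℝ) (hx : x ∈ Icc (0:ℝ) 1) (hr0 : 0 < r) (hr1 : r ≤ 1) :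
    ENNReal.ofReal r ≤ volume (Metric.ball x r ∩ Icc (0:ℝ) 1) := by
  obtain ⟨hx0, hx1⟩ := hx
  have hsub : Ioo (max (x - r) 0) (min (x + r) 1) ⊆ Metric.ball x r ∩ Icc (0:ℝ) 1 := by
    intro z hz
    obtain ⟨h1, h2⟩ := hz
    have ha := le_max_left (x - r) 0
    have hb := le_max_right (x - r) 0
    have hc := min_le_left (x + r) 1
    have hd := min_le_right (x + r) 1
    constructor
    · rw [Real.ball_eq_Ioo]
      exact ⟨lt_of_le_of_lt ha h1, lt_of_lt_of_le h2 hc⟩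
    · exact ⟨le_of_lt (lt_of_le_of_lt hb h1), le_of_lt (lt_of_lt_of_le h2 hd)⟩
  calc ENNReal.ofReal r ≤ volume (Ioo (max (x - r) 0) (min (x + r) 1)) := by
        rw [Real.volume_Ioo]
        apply ENNReal.ofReal_le_ofReal
        have h1 : r + max (x - r) 0 ≤ x + r := by
          rw [add_comm]; gcongr; exact max_le (by linarith) hx0
        have h2 : r + max (x - r) 0 ≤ 1 := by
          have : max (x - r) 0 ≤ 1 - r := max_le (by linarith) (by linarith)
          linarith
        linarith [le_min h1 h2]
    _ ≤ _ := measure_mono hsub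


theorem stmt_2 (α C : ℝ) (hα : 0 < α) (hα1 : α ≤ 1) (hC : 0 < C)
    (f : ℝ → ℝ) (hf : ∀ x ∈ Icc (0:ℝ) 1, ∀ z ∈ Icc (0:ℝ) 1, |f x - f z| ≤ C * |x - z| ^ α)
    (μ : Measure ℝ) (hμ : μ = Measure.map f (volume.restrict (Icc (0:ℝ) 1)))
    (hdim : ∀ y ∈ f '' Icc (0:ℝ) 1, (1 : EReal) ≤ lowerLocalDim μ y) :
    ∀ y : ℝ, upperMinkowski (f ⁻¹' {y} ∩ Icc (0:ℝ) 1) ≤ 1 - α := by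
  intro y
  set E : Set ℝ := f ⁻¹' {y} ∩ Icc (0:ℝ) 1 with hEdef
  set F : Filter ℝ := nhdsWithin (0:ℝ) (Ioi 0) with hFdef
  have hIoo : Ioo (0:ℝ) 1 ∈ F := Ioo_mem_nhdsGT_of_mem ⟨le_refl 0, zero_lt_one⟩
  rw [upperMinkowski]
  by_cases hEx : E.Nonempty
  swap
  · -- empty level set : packing number is identically 0
    rw [not_nonempty_iff_eq_empty] at hEx
    have hzero : ∀ r : ℝ, packingNum E r = 0 := by
      intro r
      rw [packingNum]
      have hset : {n : ℕ | ∃ s : Finset ℝ, ↑s ⊆ E ∧ s.card = n ∧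
          (s : Set ℝ).PairwiseDisjoint (fun x => Metric.ball x r)} = {0} := by
        ext n
        constructor
        · rintro ⟨s, hs, hcard, -⟩
          rw [hEx, subset_empty_iff, Finset.coe_eq_empty] at hs
          simp [← hcard, hs]
        · rintro rfl
          exact ⟨∅, by simp, by simp, by simp⟩
      rw [hset, csSup_singleton]
    simp only [hzero, Nat.cast_zero, Real.log_zero, zero_div]
    rw [limsup_const]
    linarith
  obtain ⟨x₀, hx₀y, hx₀⟩ := hEx
  simp only [mem_preimage, mem_singleton_iff] at hx₀y
  -- continuity of f on [0,1]
  have hcont : ContinuousOn f (Icc (0:ℝ) 1) := by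
    intro x hx
    have hpow : Tendsto (fun u : ℝ => u ^ α) (nhds 0) (nhds 0) := by
      have h := Real.continuousAt_rpow_const 0 α (Or.inr hα.le)
      have h0 : (0:ℝ) ^ α = 0 := Real.zero_rpow hα.ne'
      unfold ContinuousAt at h
      simp only [h0] at h; exact h
    have h1 : Tendsto (fun z : ℝ => C * |z - x| ^ α) (nhdsWithin x (Icc (0:ℝ) 1)) (nhds 0) := by
      have habs : Tendsto (fun z : ℝ => |z - x|) (nhdsWithin x (Icc (0:ℝ) 1)) (nhds 0) := by
        have hc : Continuous (fun z : ℝ => |z - x|) := (continuous_id.sub continuous_const).abs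
        have := hc.tendsto x
        simp only [sub_self, abs_zero] at this
        exact this.mono_left nhdsWithin_le_nhds
      have := (hpow.comp habs).const_mul C
      simpa using this
    rw [ContinuousWithinAt, tendsto_iff_dist_tendsto_zero]
    refine squeeze_zero' (Eventually.of_forall fun z => dist_nonneg) ?_ h1
    filter_upwards [eventually_mem_nhdsWithin] with z hz
    rw [Real.dist_eq]
    exact hf z hz x hx
  set ν : Measure ℝ := volume.restrict (Icc (0:ℝ) 1) with hνdef
  -- a.e. measurability of f
  have haem : AEMeasurable f ν := by
    refine ⟨fun x => f (min (max x 0) 1), ?_, ?_⟩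
    · have hclamp : Continuous fun x : ℝ => min (max x 0) 1 :=
        (continuous_id.max continuous_const).min continuous_const
      have hmaps : ∀ x : ℝ, min (max x 0) 1 ∈ Icc (0:ℝ) 1 := by
        intro x
        constructor
        · exact le_min (le_max_right x 0) zero_le_one
        · exact min_le_right _ _
      exact (hcont.comp_continuous hclamp hmaps).measurable
    · filter_upwards [ae_restrict_mem measurableSet_Icc] with x hx
      rw [max_eq_left hx.1, min_eq_left hx.2]
  have hμuniv : μ Set.univ = 1 := by
    rw [hμ, Measure.map_apply_of_aemeasurable haem MeasurableSet.univ, preimage_univ,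
      Measure.restrict_apply MeasurableSet.univ, univ_inter, Real.volume_Icc]
    norm_num
  -- the key packing estimate
  have key : ∀ r ∈ Ioo (0:ℝ) 1, ∀ s : Finset ℝ, ↑s ⊆ E →
      Set.PairwiseDisjoint (s : Set ℝ) (fun x => Metric.ball x r) →
      μ (Metric.ball y ((C+1) * r ^ α)) ≥ (s.card : ENNReal) * ENNReal.ofReal r := by
    intro r hr s hsE hdisj
    rw [ge_iff_le]
    have hsub : ∀ x ∈ s, Metric.ball x r ∩ Icc (0:ℝ) 1 ⊆
        f ⁻¹' (Metric.ball y ((C+1) * r ^ α)) ∩ Icc (0:ℝ) 1 := by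
      intro x hxs z hz
      obtain ⟨hz1, hz2⟩ := hz
      have hxE := hsE hxs
      refine ⟨?_, hz2⟩
      simp only [mem_preimage, Metric.mem_ball, Real.dist_eq]
      have hfz := hf z hz2 x hxE.2
      have hrpow : (0:ℝ) < r ^ α := Real.rpow_pos_of_pos hr.1 α
      have hzx : |z - x| < r := by
        rw [Metric.mem_ball, Real.dist_eq] at hz1; exact hz1
      have hmono : |z - x| ^ α ≤ r ^ α :=
        Real.rpow_le_rpow (abs_nonneg _) hzx.le hα.le
      have hyx : f x = y := hxE.1
      calc |f z - y| = |f z - f x| := by rw [hyx]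
        _ ≤ C * |z - x| ^ α := hfz
        _ ≤ C * r ^ α := by nlinarith
        _ < (C+1) * r ^ α := by nlinarith
    calc (s.card : ENNReal) * ENNReal.ofReal r
        = ∑ _x ∈ s, ENNReal.ofReal r := by
          rw [Finset.sum_const, nsmul_eq_mul]
      _ ≤ ∑ x ∈ s, volume (Metric.ball x r ∩ Icc (0:ℝ) 1) :=
          Finset.sum_le_sum fun x hx => aux_ball_vol x r (hsE hx).2 hr.1 hr.2.le
      _ = volume (⋃ x ∈ s, Metric.ball x r ∩ Icc (0:ℝ) 1) := by
          refine (measure_biUnion_finset ?_ ?_).symm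
          · exact hdisj.mono fun x => inter_subset_left
          · exact fun x _ => measurableSet_ball.inter measurableSet_Icc
      _ ≤ volume (f ⁻¹' (Metric.ball y ((C+1) * r ^ α)) ∩ Icc (0:ℝ) 1) :=
          measure_mono (iUnion₂_subset hsub)
      _ = ν (f ⁻¹' (Metric.ball y ((C+1) * r ^ α))) :=
          (Measure.restrict_apply' measurableSet_Icc).symm
      _ = μ (Metric.ball y ((C+1) * r ^ α)) := by
          rw [hμ, Measure.map_apply_of_aemeasurable haem measurableSet_ball]
  -- consequence for the packing number
  have hN : ∀ r ∈ Ioo (0:ℝ) 1,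
      (packingNum E r : ENNReal) * ENNReal.ofReal r ≤ μ (Metric.ball y ((C+1) * r ^ α)) := by
    intro r hr
    have hBdd : BddAbove {n : ℕ | ∃ s : Finset ℝ, ↑s ⊆ E ∧ s.card = n ∧
        (s : Set ℝ).PairwiseDisjoint (fun x => Metric.ball x r)} := by
      refine ⟨⌈1/r⌉₊, ?_⟩
      rintro n ⟨s, hsE, hcard, hdisj⟩
      have h1 : (n : ENNReal) * ENNReal.ofReal r ≤ 1 := by
        rw [← hcard]
        exact (key r hr s hsE hdisj).trans
          ((measure_mono (subset_univ _)).trans hμuniv.le)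
      rw [← ENNReal.ofReal_natCast, ← ENNReal.ofReal_mul (Nat.cast_nonneg n),
        ENNReal.ofReal_le_one] at h1
      have h2 : (n : ℝ) ≤ 1/r := (le_div_iff₀ hr.1).mpr h1
      exact_mod_cast h2.trans (Nat.le_ceil _)
    have hmem : packingNum E r ∈ {n : ℕ | ∃ s : Finset ℝ, ↑s ⊆ E ∧ s.card = n ∧
        (s : Set ℝ).PairwiseDisjoint (fun x => Metric.ball x r)} := by
      rw [packingNum]
      exact Nat.sSup_mem ⟨0, ∅, by simp, by simp, by simp⟩ hBdd
    obtain ⟨s, hsE, hcard, hdisj⟩ := hmem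
    rw [← hcard]
    exact key r hr s hsE hdisj
  -- conclude
  have main : ∀ ε : ℝ, 0 < ε →
      limsup (fun r : ℝ => Real.log (packingNum E r) / (-Real.log r)) F ≤ 1 - α + ε := by
    intro ε hε
    set ε₁ : ℝ := min (ε / (2*α)) (1/2) with hε₁def
    have hε₁pos : 0 < ε₁ := lt_min (by positivity) (by norm_num)
    have hε₁half : ε₁ ≤ 1/2 := min_le_right _ _
    have hαε₁ : α * ε₁ ≤ ε / 2 := by
      have h1 : ε₁ ≤ ε / (2*α) := min_le_left _ _
      have := mul_le_mul_of_nonneg_left h1 hα.le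
      rw [mul_div_assoc'] at this
      calc α * ε₁ ≤ α * ε / (2*α) := this
        _ = ε / 2 := by field_simp
    set t : ℝ := 1 - ε₁ with htdef
    have htpos : 0 < t := by simp only [htdef]; linarith
    have htlt : t < 1 := by simp only [htdef]; linarith
    -- measure decay near y
    have hm_ev : ∀ᶠ ρ in F, μ (Metric.ball y ρ) ≤ ENNReal.ofReal (ρ ^ t) := by
      have hlt : (t : EReal) < lowerLocalDim μ y := by
        refine lt_of_lt_of_le ?_ (hdim y ⟨x₀, hx₀, hx₀y⟩)
        exact_mod_cast htlt
      rw [lowerLocalDim] at hlt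
      have hev := eventually_lt_of_lt_liminf hlt
      filter_upwards [hev, hIoo] with ρ hρlt hρm
      by_cases hm0 : μ (Metric.ball y ρ) = 0
      · simp [hm0]
      have hmtop : μ (Metric.ball y ρ) ≠ ⊤ := by
        refine ne_of_lt (lt_of_le_of_lt ?_ ENNReal.one_lt_top)
        exact (measure_mono (subset_univ _)).trans hμuniv.le
      set m : ℝ := (μ (Metric.ball y ρ)).toReal with hmdef
      have hmpos : 0 < m := ENNReal.toReal_pos hm0 hmtop
      rw [ENNReal.log_pos_real hm0 hmtop, ← EReal.coe_div, EReal.coe_lt_coe_iff] at hρlt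
      have hlogρ : Real.log ρ < 0 := Real.log_neg hρm.1 hρm.2
      rw [lt_div_iff_of_neg hlogρ] at hρlt
      have hlt2 : m < ρ ^ t := by
        have h2 : Real.log m < Real.log (ρ ^ t) := by
          rw [Real.log_rpow hρm.1]; exact hρlt
        exact (Real.log_lt_log_iff hmpos (Real.rpow_pos_of_pos hρm.1 t)).mp h2
      calc μ (Metric.ball y ρ) = ENNReal.ofReal m := (ENNReal.ofReal_toReal hmtop).symm
        _ ≤ ENNReal.ofReal (ρ ^ t) := ENNReal.ofReal_le_ofReal hlt2.le
    -- transport along r ↦ (C+1) r^α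
    have htend : Tendsto (fun r : ℝ => (C+1) * r ^ α) F F := by
      apply tendsto_nhdsWithin_of_tendsto_nhds_of_eventually_within
      · have hpow : Tendsto (fun u : ℝ => u ^ α) (nhds 0) (nhds 0) := by
          have h := Real.continuousAt_rpow_const 0 α (Or.inr hα.le)
          have h0 : (0:ℝ) ^ α = 0 := Real.zero_rpow hα.ne'
          unfold ContinuousAt at h
          simp only [h0] at h; exact h
        have hid : Tendsto (fun r : ℝ => r) F (nhds 0) := tendsto_id.mono_right nhdsWithin_le_nhds
        have := (hpow.comp hid).const_mul (C+1)
        simpa using this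
      · filter_upwards [self_mem_nhdsWithin] with r hr
        have : (0:ℝ) < r := hr
        have : (0:ℝ) < (C+1) * r ^ α := by positivity
        exact this
    have hm_ev' : ∀ᶠ r in F,
        μ (Metric.ball y ((C+1) * r ^ α)) ≤ ENNReal.ofReal (((C+1) * r ^ α) ^ t) :=
      htend.eventually hm_ev
    have hlog_ev : ∀ᶠ r in F, t * Real.log (C+1) ≤ ε/2 * (-Real.log r) := by
      have h := Real.tendsto_log_nhdsGT_zero.eventually
        (eventually_le_atBot (-(t * Real.log (C+1) / (ε/2))))
      filter_upwards [h] with r hr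
      have h2 : t * Real.log (C+1) / (ε/2) ≤ -Real.log r := by linarith
      rw [div_le_iff₀ (by positivity : (0:ℝ) < ε/2)] at h2
      linarith
    have hcob : IsCoboundedUnder (· ≤ ·) F
        (fun r : ℝ => Real.log (packingNum E r) / (-Real.log r)) := by
      apply isCoboundedUnder_le_of_eventually_le (x := 0) F
      filter_upwards [hIoo] with r hr
      have hlogr : Real.log r < 0 := Real.log_neg hr.1 hr.2
      apply div_nonneg (Real.log_natCast_nonneg _)
      linarith
    refine limsup_le_of_le hcob ?_
    filter_upwards [hIoo, hm_ev', hlog_ev] with r hrm hmb hlb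
    have hlogr : Real.log r < 0 := Real.log_neg hrm.1 hrm.2
    have hnegpos : (0:ℝ) < -Real.log r := by linarith
    rw [div_le_iff₀ hnegpos]
    by_cases hN0 : packingNum E r = 0
    · rw [hN0]
      simp only [Nat.cast_zero, Real.log_zero]
      have h1α : (0:ℝ) ≤ 1 - α + ε := by linarith
      positivity
    have hkey := (hN r hrm).trans hmb
    have hXpos : (0:ℝ) < ((C+1) * r ^ α) ^ t := by
      have : (0:ℝ) < r ^ α := Real.rpow_pos_of_pos hrm.1 α
      have : (0:ℝ) < (C+1) * r ^ α := by positivity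
      exact Real.rpow_pos_of_pos this t
    have hreal : (packingNum E r : ℝ) * r ≤ ((C+1) * r ^ α) ^ t := by
      rw [← ENNReal.ofReal_natCast, ← ENNReal.ofReal_mul (Nat.cast_nonneg _)] at hkey
      exact (ENNReal.ofReal_le_ofReal_iff hXpos.le).mp hkey
    have hNpos : (0:ℝ) < (packingNum E r : ℝ) := by
      exact_mod_cast Nat.pos_of_ne_zero hN0
    have hrapos : (0:ℝ) < r ^ α := Real.rpow_pos_of_pos hrm.1 α
    have hCrpos : (0:ℝ) < (C+1) * r ^ α := by positivity
    have hlogN : Real.log (packingNum E r) ≤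
        t * (Real.log (C+1) + α * Real.log r) - Real.log r := by
      have h1 : (packingNum E r : ℝ) ≤ ((C+1) * r ^ α) ^ t / r :=
        (le_div_iff₀ hrm.1).mpr hreal
      have h2 := Real.log_le_log hNpos h1
      rw [Real.log_div hXpos.ne' hrm.1.ne', Real.log_rpow hCrpos,
        Real.log_mul (by positivity) hrapos.ne', Real.log_rpow hrm.1] at h2
      linarith
    have h4 : α * ε₁ * (-Real.log r) ≤ (ε/2) * (-Real.log r) :=
      mul_le_mul_of_nonneg_right hαε₁ hnegpos.le
    simp only [htdef] at hlogN hlb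
    nlinarith [hlogN, hlb, h4]
  -- finish: from ∀ ε > 0
  by_contra hcon
  push_neg at hcon
  have hε : 0 < (limsup (fun r : ℝ => Real.log (packingNum E r) / (-Real.log r)) F - (1 - α)) / 2 := by
    linarith
  have := main _ hε
  linarith
end

section
/- Let ν be a finite compactly supported Borel measure on ℝ² with finite (2-β)-energy, I_{2-β}(ν) < ∞, for some 0 < β < 1. Then for Lebesgue-almost every θ ∈ [0, 2π], the projected measure ν^θ = (proj_θ)_* ν is absolutely continuous with respect to Lebesgue measure on ℝ. -/
open MeasureTheory Set ENNReal Real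

/-- The `s`-energy of a measure. -/
noncomputable def energy {X : Type*} [MetricSpace X] [MeasurableSpace X]
    (μ : Measure X) (s : ℝ) : ℝ≥0∞ :=
  ∫⁻ x, ∫⁻ y, (edist x y) ^ (-s) ∂μ ∂μ

open Filter Topology

section Aux

/-- The projection in direction `θ`. -/
noncomputable def projL (θ : ℝ) (p : ℝ × ℝ) : ℝ := p.1 * Real.cos θ + p.2 * Real.sin θ

lemma projL_meas (θ : ℝ) : Measurable (projL θ) := by
  unfold projL; fun_prop

/-- The kernel `(2r)⁻¹ 1_{|proj_θ a - proj_θ b| ≤ r}`. -/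
noncomputable def ukern (r : ℝ) (x : ℝ × ((ℝ × ℝ) × (ℝ × ℝ))) : ℝ≥0∞ :=
  if |projL x.1 x.2.1 - projL x.1 x.2.2| ≤ r then (ENNReal.ofReal (2*r))⁻¹ else 0

lemma ukern_meas (r : ℝ) : Measurable (ukern r) := by
  unfold ukern projL
  refine Measurable.ite ?_ measurable_const measurable_const
  apply measurableSet_le _ measurable_const
  fun_prop

lemma ukern_inner (ν : Measure (ℝ × ℝ)) (r : ℝ) (θ : ℝ) (a : ℝ × ℝ) :
    ∫⁻ b, ukern r (θ, (a, b)) ∂ν =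
      (ENNReal.ofReal (2*r))⁻¹ * ν {b | |projL θ a - projL θ b| ≤ r} := by
  have hS : MeasurableSet {b : ℝ × ℝ | |projL θ a - projL θ b| ≤ r} := by
    apply measurableSet_le _ measurable_const
    unfold projL; fun_prop
  rw [← lintegral_indicator_const hS]
  refine lintegral_congr fun b => ?_
  simp only [ukern, indicator_apply, mem_setOf_eq]

lemma meas_ball (μ : Measure ℝ) [SFinite μ] (r : ℝ) :
    Measurable fun t => μ (Metric.closedBall t r) := by
  have h : ∀ t, μ (Metric.closedBall t r)
      = ∫⁻ y, (fun x : ℝ × ℝ => if dist x.2 x.1 ≤ r then (1:ℝ≥0∞) else 0) (t, y) ∂μ := by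
    intro t
    have hS : MeasurableSet {y : ℝ | dist y t ≤ r} :=
      measurableSet_le (measurable_id.dist measurable_const) measurable_const
    calc μ (Metric.closedBall t r) = 1 * μ {y | dist y t ≤ r} := by rw [one_mul]; rfl
    _ = ∫⁻ y, ({y : ℝ | dist y t ≤ r}.indicator (fun _ => 1)) y ∂μ :=
        (lintegral_indicator_const hS 1).symm
    _ = ∫⁻ y, (fun x : ℝ × ℝ => if dist x.2 x.1 ≤ r then (1:ℝ≥0∞) else 0) (t, y) ∂μ := by
        refine lintegral_congr fun y => ?_
        simp [indicator_apply]
  simp only [h]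
  exact Measurable.lintegral_prod_right'
    (Measurable.ite (measurableSet_le (measurable_snd.dist measurable_fst) measurable_const)
      measurable_const measurable_const)

lemma no_atoms (ν : Measure (ℝ × ℝ)) [IsFiniteMeasure ν] {β : ℝ} (hβ1 : β < 1)
    (henergy : energy ν (2 - β) ≠ ⊤) : ∀ᵐ a ∂ν, ν {a} = 0 := by
  have hneg : -(2 - β) < 0 := by linarith
  have hmeas : Measurable fun a : ℝ × ℝ => ∫⁻ b, edist a b ^ (-(2-β)) ∂ν :=
    Measurable.lintegral_prod_right' ((measurable_edist).pow_const _)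
  have hae : ∀ᵐ a ∂ν, ∫⁻ b, edist a b ^ (-(2-β)) ∂ν < ⊤ := ae_lt_top hmeas henergy
  filter_upwards [hae] with a ha
  by_contra hpos
  have h1 : ∫⁻ b in {a}, edist a b ^ (-(2-β)) ∂ν = ⊤ := by
    rw [setLIntegral_congr_fun (measurableSet_singleton a)
      (fun b hb => ?_), setLIntegral_const, ENNReal.top_mul hpos]
    rw [mem_singleton_iff] at hb
    rw [hb, edist_self, ENNReal.zero_rpow_of_neg hneg]
  have h2 : ∫⁻ b in {a}, edist a b ^ (-(2-β)) ∂ν ≤ ∫⁻ b, edist a b ^ (-(2-β)) ∂ν :=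
    setLIntegral_le_lintegral _ _
  rw [h1] at h2
  exact absurd (top_le_iff.1 h2) ha.ne

lemma ang_pt {x ε : ℝ} (hε : 0 ≤ ε) (h : |Real.cos x| ≤ ε) :
    ∃ k : ℤ, |x - (π/2 + k*π)| ≤ π/2*ε := by
  set k : ℤ := round ((x - π/2)/π) with hk
  refine ⟨k, ?_⟩
  set y : ℝ := x - (π/2 + k*π) with hy
  have hπ := Real.pi_pos
  have hy2 : |y| ≤ π/2 := by
    have h1 : |(x - π/2)/π - (k:ℝ)| ≤ 1/2 := abs_sub_round _
    have : y = ((x - π/2)/π - (k:ℝ)) * π := by field_simp [hy]; ring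
    rw [this, abs_mul, abs_of_pos hπ]
    nlinarith [abs_nonneg ((x - π/2)/π - (k:ℝ))]
  have hcos : |Real.cos x| = |Real.sin y| := by
    have hx : x = (y + π/2) + k*π := by rw [hy]; ring
    rw [hx, Real.cos_add_int_mul_pi, Real.cos_add_pi_div_two]
    rcases Int.even_or_odd k with hk' | hk'
    · rw [hk'.neg_one_zpow]; simp
    · rw [hk'.neg_one_zpow]; simp
  have hsin : 2/π * |y| ≤ ε := by
    calc 2/π * |y| ≤ |Real.sin y| := Real.mul_abs_le_abs_sin hy2
    _ = |Real.cos x| := hcos.symm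
    _ ≤ ε := h
  have h2 : π/2*(2/π*|y|) ≤ π/2*ε := mul_le_mul_of_nonneg_left hsin (by positivity)
  have h3 : π/2*(2/π*|y|) = |y| := by field_simp
  calc |x - (π/2 + k*π)| = |y| := rfl
  _ = π/2*(2/π*|y|) := h3.symm
  _ ≤ π/2*ε := h2

lemma ang_meas {φ ε : ℝ} (hφ : |φ| ≤ π) (hε : 0 ≤ ε) (hε1 : ε ≤ 1) :
    volume {θ ∈ Icc (0:ℝ) (2*π) | |Real.cos (θ - φ)| ≤ ε} ≤ ENNReal.ofReal (9*π*ε) := by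
  have hπ := Real.pi_pos
  have habs := abs_le.1 hφ
  have hsub : {θ ∈ Icc (0:ℝ) (2*π) | |Real.cos (θ - φ)| ≤ ε} ⊆
      ⋃ k ∈ Finset.Icc (-4:ℤ) 4, Metric.closedBall (φ + π/2 + k*π) (π/2*ε) := by
    rintro θ ⟨hθI, hθ⟩
    obtain ⟨k, hk⟩ := ang_pt hε hθ
    have hθ1 := hθI.1; have hθ2 := hθI.2
    have hko : |(k:ℝ)| ≤ 4 := by
      have h1 : |θ - φ - (π/2 + k*π)| ≤ π/2 := hk.trans (by nlinarith)
      have h2 := abs_le.1 h1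
      rw [abs_le]
      constructor <;> [nlinarith; nlinarith]
    have hk2 := abs_le.1 hko
    have hki : k ∈ Finset.Icc (-4:ℤ) 4 := by
      have ha : (-4:ℤ) ≤ k := by exact_mod_cast hk2.1
      have hb : k ≤ (4:ℤ) := by exact_mod_cast hk2.2
      exact Finset.mem_Icc.2 ⟨ha, hb⟩
    refine mem_iUnion₂.2 ⟨k, hki, ?_⟩
    rw [Metric.mem_closedBall, Real.dist_eq]
    calc |θ - (φ + π/2 + k*π)| = |θ - φ - (π/2 + k*π)| := by ring_nf
    _ ≤ π/2*ε := hk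
  calc volume {θ ∈ Icc (0:ℝ) (2*π) | |Real.cos (θ - φ)| ≤ ε}
      ≤ volume (⋃ k ∈ Finset.Icc (-4:ℤ) 4, Metric.closedBall (φ + π/2 + k*π) (π/2*ε)) :=
        measure_mono hsub
    _ ≤ ∑ k ∈ Finset.Icc (-4:ℤ) 4, volume (Metric.closedBall (φ + π/2 + (k:ℝ)*π) (π/2*ε)) :=
        measure_biUnion_finset_le _ _
    _ = ∑ _k ∈ Finset.Icc (-4:ℤ) 4, ENNReal.ofReal (2*(π/2*ε)) := by
        simp [Real.volume_closedBall]
    _ = 9 * ENNReal.ofReal (2*(π/2*ε)) := by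
        rw [Finset.sum_const]; norm_num; rfl
    _ ≤ ENNReal.ofReal (9*π*ε) := by
        rw [show (9:ℝ≥0∞) = ENNReal.ofReal 9 by norm_num, ← ENNReal.ofReal_mul (by norm_num)]
        apply ENNReal.ofReal_le_ofReal; nlinarith

lemma ang_meas2 (v : ℝ × ℝ) (hv : v ≠ 0) {r : ℝ} (hr : 0 < r) :
    volume {θ ∈ Icc (0:ℝ) (2*π) | |v.1 * Real.cos θ + v.2 * Real.sin θ| ≤ r} ≤
      ENNReal.ofReal (9*π*(r / ‖(⟨v.1, v.2⟩ : ℂ)‖)) := by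
  have hπ := Real.pi_pos
  set z : ℂ := ⟨v.1, v.2⟩ with hz
  have hz0 : z ≠ 0 := by
    simp only [hz, ne_eq, Complex.ext_iff, Complex.zero_re, Complex.zero_im]
    intro h
    exact hv (Prod.ext h.1 h.2)
  set m : ℝ := ‖z‖ with hm
  have hm0 : 0 < m := norm_pos_iff.2 hz0
  have hcosφ : Real.cos z.arg = v.1 / m := Complex.cos_arg hz0
  have hsinφ : Real.sin z.arg = v.2 / m := Complex.sin_arg z
  have hset : {θ ∈ Icc (0:ℝ) (2*π) | |v.1 * Real.cos θ + v.2 * Real.sin θ| ≤ r} =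
      {θ ∈ Icc (0:ℝ) (2*π) | |Real.cos (θ - z.arg)| ≤ r/m} := by
    ext θ
    simp only [mem_setOf_eq, and_congr_right_iff]
    intro _
    rw [Real.cos_sub, hcosφ, hsinφ]
    have : Real.cos θ * (v.1 / m) + Real.sin θ * (v.2 / m)
        = (v.1 * Real.cos θ + v.2 * Real.sin θ) / m := by ring
    rw [this, abs_div, abs_of_pos hm0, div_le_div_iff_of_pos_right hm0]
  rw [hset]
  rcases le_or_gt (r/m) 1 with hle | hlt
  · exact ang_meas (Complex.abs_arg_le_pi z) (by positivity) hle
  · calc volume {θ ∈ Icc (0:ℝ) (2*π) | |Real.cos (θ - z.arg)| ≤ r/m}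
        ≤ volume (Icc (0:ℝ) (2*π)) := measure_mono (sep_subset _ _)
      _ = ENNReal.ofReal (2*π) := by rw [Real.volume_Icc]; norm_num
      _ ≤ ENNReal.ofReal (9*π*(r/m)) := by
          apply ENNReal.ofReal_le_ofReal; nlinarith

lemma kern_bound {a b : ℝ×ℝ} (hab : a ≠ b) {r : ℝ} (hr : 0 < r) :
    (ENNReal.ofReal (2*r))⁻¹ * volume {θ ∈ Icc (0:ℝ) (2*π) |
        |projL θ a - projL θ b| ≤ r} ≤
      ENNReal.ofReal (5*π / dist a b) := by
  simp only [projL]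
  have hπ := Real.pi_pos
  set v : ℝ×ℝ := a - b with hv
  have hv0 : v ≠ 0 := sub_ne_zero.2 hab
  have hexpr : ∀ θ : ℝ, (a.1*Real.cos θ + a.2*Real.sin θ) - (b.1*Real.cos θ + b.2*Real.sin θ)
      = v.1 * Real.cos θ + v.2 * Real.sin θ := by
    intro θ; simp only [hv, Prod.fst_sub, Prod.snd_sub]; ring
  set m : ℝ := ‖(⟨v.1, v.2⟩ : ℂ)‖ with hm
  set d : ℝ := dist a b with hd
  have hd0 : 0 < d := dist_pos.2 hab
  have hdm : d ≤ m := by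
    rw [hd, Prod.dist_eq, Real.dist_eq, Real.dist_eq]
    have h1 : |a.1 - b.1| ≤ m := by
      exact Complex.abs_re_le_norm ⟨v.1, v.2⟩
    have h2 : |a.2 - b.2| ≤ m := by
      exact Complex.abs_im_le_norm ⟨v.1, v.2⟩
    exact max_le h1 h2
  have hvol : volume {θ ∈ Icc (0:ℝ) (2*π) |
      |(a.1*Real.cos θ + a.2*Real.sin θ) - (b.1*Real.cos θ + b.2*Real.sin θ)| ≤ r}
      ≤ ENNReal.ofReal (9*π*(r/d)) := by
    calc volume {θ ∈ Icc (0:ℝ) (2*π) | |(a.1*Real.cos θ + a.2*Real.sin θ)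
          - (b.1*Real.cos θ + b.2*Real.sin θ)| ≤ r}
        = volume {θ ∈ Icc (0:ℝ) (2*π) | |v.1 * Real.cos θ + v.2 * Real.sin θ| ≤ r} := by
          congr 1; ext θ; simp only [mem_setOf_eq, hexpr θ]
      _ ≤ ENNReal.ofReal (9*π*(r/m)) := ang_meas2 v hv0 hr
      _ ≤ ENNReal.ofReal (9*π*(r/d)) := by
          apply ENNReal.ofReal_le_ofReal
          gcongr
  calc (ENNReal.ofReal (2*r))⁻¹ * volume {θ ∈ Icc (0:ℝ) (2*π) |
        |(a.1*Real.cos θ + a.2*Real.sin θ) - (b.1*Real.cos θ + b.2*Real.sin θ)| ≤ r}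
      ≤ (ENNReal.ofReal (2*r))⁻¹ * ENNReal.ofReal (9*π*(r/d)) := by gcongr
    _ = (ENNReal.ofReal (2*r))⁻¹ * (ENNReal.ofReal (2*r) * ENNReal.ofReal (9*π/(2*d))) := by
        rw [← ENNReal.ofReal_mul (by positivity)]
        congr 1; field_simp
    _ = ENNReal.ofReal (9*π/(2*d)) := by
        rw [← mul_assoc, ENNReal.inv_mul_cancel (by simp [hr] : ENNReal.ofReal (2*r) ≠ 0)
          ENNReal.ofReal_ne_top, one_mul]
    _ ≤ ENNReal.ofReal (5*π / d) := by
        apply ENNReal.ofReal_le_ofReal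
        rw [div_le_div_iff₀ (by positivity) (by positivity)]
        nlinarith

lemma kern_bound2 {K : Set (ℝ×ℝ)} (hK : Bornology.IsBounded K) {β : ℝ}
    (hβ1 : β < 1) {a b : ℝ×ℝ} (ha : a ∈ K) (hb : b ∈ K) (hab : a ≠ b) :
    ENNReal.ofReal (5*π / dist a b) ≤
      ENNReal.ofReal (5*π * (max 1 (Metric.diam K))^(1-β)) * edist a b ^ (-(2-β)) := by
  have hπ := Real.pi_pos
  set d : ℝ := dist a b with hd
  have hd0 : 0 < d := dist_pos.2 hab
  set D : ℝ := max 1 (Metric.diam K) with hD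
  have hD1 : (1:ℝ) ≤ D := le_max_left _ _
  have hdD : d ≤ D := le_trans (Metric.dist_le_diam_of_mem hK ha hb) (le_max_right _ _)
  have hedist : edist a b ^ (-(2-β)) = ENNReal.ofReal (d ^ (-(2-β))) := by
    rw [edist_dist, ENNReal.ofReal_rpow_of_pos hd0]
  rw [hedist, ← ENNReal.ofReal_mul (by positivity)]
  apply ENNReal.ofReal_le_ofReal
  have h1 : d ^ (1-β) ≤ D ^ (1-β) := Real.rpow_le_rpow hd0.le hdD (by linarith)
  have h2 : d ^ (1-β) * d ^ (-(2-β)) = d⁻¹ := by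
    rw [← Real.rpow_add hd0, show (1:ℝ) - β + -(2-β) = -1 by ring, Real.rpow_neg_one]
  have h3 : 5*π/d = 5*π * (d ^ (1-β) * d ^ (-(2-β))) := by
    rw [h2]; field_simp
  rw [h3]
  have h4 : (0:ℝ) ≤ d ^ (-(2-β)) := Real.rpow_nonneg hd0.le _
  calc 5*π * (d ^ (1-β) * d ^ (-(2-β)))
      ≤ 5*π * (D ^ (1-β) * d ^ (-(2-β))) := by
        apply mul_le_mul_of_nonneg_left _ (by positivity)
        exact mul_le_mul_of_nonneg_right h1 h4
    _ = 5*π * D^(1-β) * d ^ (-(2-β)) := by ring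

lemma master (ν : Measure (ℝ×ℝ)) [IsFiniteMeasure ν] {K : Set (ℝ×ℝ)} (hKc : IsCompact K)
    (hKν : ν Kᶜ = 0) {β : ℝ} (hβ1 : β < 1)
    (hatoms : ∀ᵐ a ∂ν, ν {a} = 0) {r : ℝ} (hr : 0 < r) :
    ∫⁻ θ in Icc (0:ℝ) (2*π), ∫⁻ a, ∫⁻ b, ukern r (θ, (a, b)) ∂ν ∂ν ≤
      ENNReal.ofReal (5*π*(max 1 (Metric.diam K))^(1-β)) * energy ν (2-β) := by
  set μΘ : Measure ℝ := volume.restrict (Icc (0:ℝ) (2*π)) with hμΘ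
  set CST : ℝ≥0∞ := ENNReal.ofReal (5*π*(max 1 (Metric.diam K))^(1-β)) with hCST
  have hinner_eq : ∀ θ, ∫⁻ a, ∫⁻ b, ukern r (θ,(a,b)) ∂ν ∂ν
      = ∫⁻ q, ukern r (θ,q) ∂(ν.prod ν) := fun θ =>
    (lintegral_prod _ ((ukern_meas r).comp
      (measurable_const.prodMk measurable_id)).aemeasurable).symm
  have hswap : ∫⁻ θ, (∫⁻ q, ukern r (θ, q) ∂(ν.prod ν)) ∂μΘ
      = ∫⁻ q, ∫⁻ θ, ukern r (θ, q) ∂μΘ ∂(ν.prod ν) :=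
    lintegral_lintegral_swap (ukern_meas r).aemeasurable
  -- a.e. facts on the product
  have h1 : (ν.prod ν) {q : (ℝ×ℝ)×(ℝ×ℝ) | q.1 ∉ K} = 0 := by
    have : {q : (ℝ×ℝ)×(ℝ×ℝ) | q.1 ∉ K} = Kᶜ ×ˢ univ := by ext q; simp [Set.mem_prod]
    rw [this, Measure.prod_prod, hKν, zero_mul]
  have h2 : (ν.prod ν) {q : (ℝ×ℝ)×(ℝ×ℝ) | q.2 ∉ K} = 0 := by
    have : {q : (ℝ×ℝ)×(ℝ×ℝ) | q.2 ∉ K} = univ ×ˢ Kᶜ := by ext q; simp [Set.mem_prod]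
    rw [this, Measure.prod_prod, hKν, mul_zero]
  have h3 : (ν.prod ν) {q : (ℝ×ℝ)×(ℝ×ℝ) | q.1 = q.2} = 0 := by
    rw [Measure.prod_apply (isClosed_eq continuous_fst continuous_snd).measurableSet]
    have heq : (fun a => ν (Prod.mk a ⁻¹' {q : (ℝ×ℝ)×(ℝ×ℝ) | q.1 = q.2}))
        =ᵐ[ν] fun _ => (0:ℝ≥0∞) := by
      filter_upwards [hatoms] with a ha
      have : Prod.mk a ⁻¹' {q : (ℝ×ℝ)×(ℝ×ℝ) | q.1 = q.2} = {a} := by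
        ext b; simp [eq_comm]
      rw [this]; exact ha
    rw [lintegral_congr_ae heq, lintegral_zero]
  have hae_q : ∀ᵐ q ∂(ν.prod ν), q.1 ∈ K ∧ q.2 ∈ K ∧ q.1 ≠ q.2 := by
    have : (ν.prod ν) ({q : (ℝ×ℝ)×(ℝ×ℝ) | q.1 ∉ K} ∪ {q | q.2 ∉ K} ∪ {q | q.1 = q.2}) = 0 :=
      measure_union_null (measure_union_null h1 h2) h3
    rw [ae_iff]
    refine measure_mono_null (fun q hq => ?_) this
    simp only [mem_setOf_eq, not_and, not_not] at hq ⊢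
    by_cases hqK : q.1 ∈ K
    · by_cases hqK2 : q.2 ∈ K
      · exact Or.inr (hq hqK hqK2)
      · exact Or.inl (Or.inr hqK2)
    · exact Or.inl (Or.inl hqK)
  have hbound : ∀ᵐ q ∂(ν.prod ν), ∫⁻ θ, ukern r (θ,q) ∂μΘ ≤
      CST * edist q.1 q.2 ^ (-(2-β)) := by
    filter_upwards [hae_q] with q hq
    obtain ⟨hq1, hq2, hq12⟩ := hq
    have hSm : MeasurableSet {θ : ℝ | |projL θ q.1 - projL θ q.2| ≤ r} := by
      apply measurableSet_le _ measurable_const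
      unfold projL; fun_prop
    calc ∫⁻ θ, ukern r (θ,q) ∂μΘ
        = (ENNReal.ofReal (2*r))⁻¹ * μΘ {θ | |projL θ q.1 - projL θ q.2| ≤ r} := by
          rw [← lintegral_indicator_const hSm]
          exact lintegral_congr fun θ => by simp only [ukern, indicator_apply, mem_setOf_eq]
      _ = (ENNReal.ofReal (2*r))⁻¹
            * volume {θ ∈ Icc (0:ℝ) (2*π) | |projL θ q.1 - projL θ q.2| ≤ r} := by
          rw [hμΘ, Measure.restrict_apply hSm]
          have hseteq : {θ | |projL θ q.1 - projL θ q.2| ≤ r} ∩ Icc (0:ℝ) (2*π)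
              = {θ ∈ Icc (0:ℝ) (2*π) | |projL θ q.1 - projL θ q.2| ≤ r} := by
            ext θ; simp only [mem_inter_iff, mem_setOf_eq]; tauto
          rw [hseteq]
      _ ≤ ENNReal.ofReal (5*π / dist q.1 q.2) := kern_bound hq12 hr
      _ ≤ CST * edist q.1 q.2 ^ (-(2-β)) := kern_bound2 hKc.isBounded hβ1 hq1 hq2 hq12
  calc ∫⁻ θ, ∫⁻ a, ∫⁻ b, ukern r (θ, (a, b)) ∂ν ∂ν ∂μΘ
      = ∫⁻ θ, ∫⁻ q, ukern r (θ, q) ∂(ν.prod ν) ∂μΘ := lintegral_congr hinner_eq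
    _ = ∫⁻ q, ∫⁻ θ, ukern r (θ, q) ∂μΘ ∂(ν.prod ν) := hswap
    _ ≤ ∫⁻ q, CST * edist q.1 q.2 ^ (-(2-β)) ∂(ν.prod ν) := lintegral_mono_ae hbound
    _ = CST * ∫⁻ q, edist q.1 q.2 ^ (-(2-β)) ∂(ν.prod ν) := lintegral_const_mul _
        ((measurable_edist).pow_const _)
    _ = CST * energy ν (2-β) := by
        rw [lintegral_prod _ ((measurable_edist).pow_const _).aemeasurable]
        rfl

end Aux

section PerTheta

lemma per_theta (ν : Measure (ℝ×ℝ)) [IsFiniteMeasure ν] (θ : ℝ)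
    (hL : ∫⁻ a, liminf
      (fun n : ℕ => ∫⁻ b, ukern (1/((n:ℝ)+1)) (θ, (a, b)) ∂ν) atTop ∂ν ≠ ⊤) :
    Measure.map (projL θ) ν ≪ volume := by
  have hfθ := projL_meas θ
  set νθ : Measure ℝ := Measure.map (projL θ) ν with hνθ
  haveI : IsFiniteMeasure νθ := by
    constructor
    rw [hνθ, Measure.map_apply hfθ MeasurableSet.univ]
    exact measure_lt_top ν _
  set rn : ℕ → ℝ := fun n => 1/((n:ℝ)+1) with hrn
  have hrnpos : ∀ n, 0 < rn n := fun n => by positivity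
  have hrn_t : Tendsto rn atTop (𝓝[>] 0) := by
    apply tendsto_nhdsWithin_of_tendsto_nhds_of_eventually_within _
      tendsto_one_div_add_atTop_nhds_zero_nat
    exact Eventually.of_forall fun n => hrnpos n
  set ℓ : ℝ → ℝ≥0∞ := fun t => liminf
    (fun n => (ENNReal.ofReal (2*rn n))⁻¹ * νθ (Metric.closedBall t (rn n))) atTop with hℓ
  have hballm : ∀ n, Measurable fun t =>
      (ENNReal.ofReal (2*rn n))⁻¹ * νθ (Metric.closedBall t (rn n)) :=
    fun n => (meas_ball νθ (rn n)).const_mul _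
  have hℓm : Measurable ℓ := Measurable.liminf hballm
  have hkey : ∀ a : ℝ×ℝ, liminf
      (fun n : ℕ => ∫⁻ b, ukern (1/((n:ℝ)+1)) (θ, (a,b)) ∂ν) atTop = ℓ (projL θ a) := by
    intro a
    rw [hℓ]
    congr 1
    funext n
    rw [ukern_inner]
    congr 1
    rw [hνθ, Measure.map_apply hfθ measurableSet_closedBall]
    congr 1
    ext b
    simp only [mem_setOf_eq, mem_preimage, Metric.mem_closedBall, Real.dist_eq, abs_sub_comm]
    exact Iff.rfl
  have hLν : ∫⁻ t, ℓ t ∂νθ ≠ ⊤ := by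
    rw [hνθ, lintegral_map hℓm hfθ]
    simpa only [hkey] using hL
  have haeℓ : ∀ᵐ t ∂νθ, ℓ t < ⊤ := ae_lt_top hℓm hLν
  refine Measure.AbsolutelyContinuous.mk fun S hSm hS0 => ?_
  set μ0 : Measure ℝ := volume + νθ with hμ0
  have hac : νθ ≪ μ0 := by
    intro s hs
    have h1 : νθ s ≤ μ0 s := by
      rw [hμ0, Measure.add_apply]
      exact le_add_self
    rw [hs] at h1
    exact le_antisymm h1 zero_le
  set v := Besicovitch.vitaliFamily μ0 with hv
  have key : ∀ c : ℕ, νθ (S ∩ {t | ℓ t < c}) = 0 := by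
    intro c
    have hfreq : ∀ t ∈ S ∩ {t | ℓ t < c},
        ∃ᶠ A in v.filterAt t, νθ A ≤ ((c : NNReal) • (volume : Measure ℝ)) A := by
      intro t ht
      have h1 : ∃ᶠ n in atTop,
          (ENNReal.ofReal (2*rn n))⁻¹ * νθ (Metric.closedBall t (rn n)) < c :=
        frequently_lt_of_liminf_lt (by isBoundedDefault) ht.2
      have h2 : ∃ᶠ r' in 𝓝[>] (0:ℝ), νθ (Metric.closedBall t r') ≤
          ((c : NNReal) • (volume : Measure ℝ)) (Metric.closedBall t r') := by
        apply hrn_t.frequently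
        apply h1.mono
        intro n hn
        have hx0 : ENNReal.ofReal (2*rn n) ≠ 0 := by
          simp only [ne_eq, ENNReal.ofReal_eq_zero, not_le]
          positivity
        have hxt : ENNReal.ofReal (2*rn n) ≠ ⊤ := ENNReal.ofReal_ne_top
        have h3 : νθ (Metric.closedBall t (rn n)) ≤ (c : ℝ≥0∞) * ENNReal.ofReal (2*rn n) := by
          have h4 : ENNReal.ofReal (2*rn n) *
              ((ENNReal.ofReal (2*rn n))⁻¹ * νθ (Metric.closedBall t (rn n)))
              = νθ (Metric.closedBall t (rn n)) := by
            rw [← mul_assoc, ENNReal.mul_inv_cancel hx0 hxt, one_mul]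
          rw [← h4]
          calc ENNReal.ofReal (2*rn n) *
              ((ENNReal.ofReal (2*rn n))⁻¹ * νθ (Metric.closedBall t (rn n)))
              ≤ ENNReal.ofReal (2*rn n) * c := mul_le_mul_right hn.le _
            _ = (c : ℝ≥0∞) * ENNReal.ofReal (2*rn n) := mul_comm _ _
        calc νθ (Metric.closedBall t (rn n)) ≤ (c : ℝ≥0∞) * ENNReal.ofReal (2*rn n) := h3
          _ = ((c : NNReal) • (volume : Measure ℝ)) (Metric.closedBall t (rn n)) := by
            simp [Measure.smul_apply, ENNReal.smul_def, Real.volume_closedBall]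
      exact (Besicovitch.tendsto_filterAt μ0 t).frequently h2
    have hle := v.measure_le_of_frequently_le ((c : NNReal) • (volume : Measure ℝ)) hac
      (S ∩ {t | ℓ t < c}) hfreq
    refine le_antisymm (hle.trans ?_) zero_le
    calc ((c : NNReal) • (volume : Measure ℝ)) (S ∩ {t | ℓ t < c})
        ≤ ((c : NNReal) • (volume : Measure ℝ)) S :=
          measure_mono inter_subset_left
      _ = 0 := by rw [Measure.smul_apply, hS0, smul_zero]
  have hsub : S ⊆ (⋃ c : ℕ, S ∩ {t | ℓ t < c}) ∪ {t | ¬ ℓ t < ⊤} := by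
    intro t ht
    by_cases h : ℓ t < ⊤
    · obtain ⟨c, hc⟩ := ENNReal.exists_nat_gt h.ne
      exact Or.inl (mem_iUnion.2 ⟨c, ht, hc⟩)
    · exact Or.inr h
  have h0 : νθ {t | ¬ ℓ t < ⊤} = 0 := ae_iff.1 haeℓ
  have h1 : νθ (⋃ c : ℕ, S ∩ {t | ℓ t < c}) = 0 := measure_iUnion_null key
  have htot := (measure_mono (μ := νθ) hsub).trans
    (measure_union_le (μ := νθ) (⋃ c : ℕ, S ∩ {t | ℓ t < c}) {t | ¬ ℓ t < ⊤})
  rw [h0, h1, add_zero] at htot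
  exact le_antisymm htot zero_le

end PerTheta

theorem stmt_11 (ν : Measure (ℝ × ℝ)) [IsFiniteMeasure ν]
    (hsupp : ∃ K : Set (ℝ × ℝ), IsCompact K ∧ ν Kᶜ = 0)
    (β : ℝ) (hβ : 0 < β) (hβ1 : β < 1) (henergy : energy ν (2 - β) ≠ ⊤) :
    ∀ᵐ θ ∂(volume.restrict (Icc (0:ℝ) (2 * π))),
      Measure.map (fun p : ℝ × ℝ => p.1 * Real.cos θ + p.2 * Real.sin θ) ν ≪ volume := by
  obtain ⟨K, hKc, hKν⟩ := hsupp
  have hatoms := no_atoms ν hβ1 henergy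
  set C : ℝ≥0∞ := ENNReal.ofReal (5*π*(max 1 (Metric.diam K))^(1-β)) * energy ν (2-β) with hC
  have hCt : C ≠ ⊤ := ENNReal.mul_ne_top ENNReal.ofReal_ne_top henergy
  have hw : ∀ n : ℕ, Measurable fun x : ℝ × (ℝ×ℝ) =>
      ∫⁻ b, ukern (1/((n:ℝ)+1)) (x.1, (x.2, b)) ∂ν := by
    intro n
    exact Measurable.lintegral_prod_right'
      (f := fun p : (ℝ × (ℝ×ℝ)) × (ℝ×ℝ) => ukern (1/((n:ℝ)+1)) (p.1.1, (p.1.2, p.2)))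
      ((ukern_meas _).comp (by fun_prop))
  have hFatou1 : ∀ θ : ℝ,
      ∫⁻ a, liminf (fun n : ℕ => ∫⁻ b, ukern (1/((n:ℝ)+1)) (θ,(a,b)) ∂ν) atTop ∂ν
      ≤ liminf (fun n : ℕ => ∫⁻ a, ∫⁻ b, ukern (1/((n:ℝ)+1)) (θ,(a,b)) ∂ν ∂ν) atTop := by
    intro θ
    exact lintegral_liminf_le fun n =>
      (hw n).comp (measurable_const.prodMk measurable_id)
  have hFatou2 : ∫⁻ θ in Icc (0:ℝ) (2*π),
      (∫⁻ a, liminf (fun n : ℕ => ∫⁻ b, ukern (1/((n:ℝ)+1)) (θ,(a,b)) ∂ν) atTop ∂ν) ≤ C := by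
    calc ∫⁻ θ in Icc (0:ℝ) (2*π),
        (∫⁻ a, liminf (fun n : ℕ => ∫⁻ b, ukern (1/((n:ℝ)+1)) (θ,(a,b)) ∂ν) atTop ∂ν)
        ≤ ∫⁻ θ in Icc (0:ℝ) (2*π),
          liminf (fun n : ℕ => ∫⁻ a, ∫⁻ b, ukern (1/((n:ℝ)+1)) (θ,(a,b)) ∂ν ∂ν) atTop :=
          lintegral_mono hFatou1
      _ ≤ liminf (fun n : ℕ => ∫⁻ θ in Icc (0:ℝ) (2*π),
            ∫⁻ a, ∫⁻ b, ukern (1/((n:ℝ)+1)) (θ,(a,b)) ∂ν ∂ν) atTop :=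
          lintegral_liminf_le fun n => Measurable.lintegral_prod_right' (hw n)
      _ ≤ C := by
          refine le_trans (liminf_le_liminf (Eventually.of_forall fun n =>
            master ν hKc hKν hβ1 hatoms (by positivity : (0:ℝ) < 1/((n:ℝ)+1)))) ?_
          simp [liminf_const, hC]
  have hmeasθ : Measurable fun θ : ℝ =>
      ∫⁻ a, liminf (fun n : ℕ => ∫⁻ b, ukern (1/((n:ℝ)+1)) (θ,(a,b)) ∂ν) atTop ∂ν := by
    exact Measurable.lintegral_prod_right'
      (f := fun p : ℝ × (ℝ×ℝ) =>
        liminf (fun n : ℕ => ∫⁻ b, ukern (1/((n:ℝ)+1)) (p.1,(p.2,b)) ∂ν) atTop)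
      (Measurable.liminf fun n => hw n)
  have hae := ae_lt_top hmeasθ (ne_top_of_le_ne_top hCt hFatou2)
  filter_upwards [hae] with θ hθ
  exact per_theta ν θ hθ.ne
end

section
/- Let F ⊂ ℝ² be a Borel set with Hausdorff dimension dim_H(F) ≤ s for some s ≥ 1. Then for every θ ∈ [0,2π], for Lebesgue-almost every y ∈ ℝ, the slice F ∩ proj_θ^{-1}({y}) has Hausdorff dimension at most s - 1. -/
open MeasureTheory Set Real
open scoped ENNReal NNReal

open EMetric Filter in
/-- Eilenberg-type slicing lemma: if `μH[t] A = 0` and `f` is Lipschitz, then a.e. slice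
has zero `(t-1)`-dimensional Hausdorff measure (for `t > 1`). -/
lemma slice_lemma_aux {f : ℝ × ℝ → ℝ} {K : NNReal} (hf : LipschitzWith K f)
    {A : Set (ℝ × ℝ)} {t : ℝ} (ht : 1 < t) (hA : μH[t] A = 0) :
    ∀ᵐ y : ℝ ∂volume, μH[t - 1] (A ∩ f ⁻¹' {y}) = 0 := by
  classical
  have ht0 : (0:ℝ) < t := lt_trans zero_lt_one ht
  have ht1 : (0:ℝ) < t - 1 := sub_pos.2 ht
  -- extract good covers from `μH[t] A = 0`
  have h1 : ∀ r : ℝ≥0∞, 0 < r → ∀ ε : ℝ≥0∞, 0 < ε →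
      ∃ U : ℕ → Set (ℝ × ℝ), (A ⊆ ⋃ n, U n) ∧ (∀ n, diam (U n) ≤ r) ∧
        ∑' n, diam (U n) ^ t ≤ ε := by
    intro r hr ε hε
    have h2 := Measure.hausdorffMeasure_apply t A
    rw [hA] at h2
    have h3 : (⨅ (U : ℕ → Set (ℝ × ℝ)) (_ : A ⊆ ⋃ n, U n) (_ : ∀ n, diam (U n) ≤ r),
        ∑' n, ⨆ _ : (U n).Nonempty, diam (U n) ^ t) = 0 := by
      refine le_antisymm (le_trans ?_ h2.ge) zero_le
      exact le_iSup₂ (f := fun (r' : ℝ≥0∞) (_ : 0 < r') =>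
        ⨅ (U : ℕ → Set (ℝ × ℝ)) (_ : A ⊆ ⋃ n, U n) (_ : ∀ n, diam (U n) ≤ r'),
          ∑' n, ⨆ _ : (U n).Nonempty, diam (U n) ^ t) r hr
    have h4 : (⨅ (U : ℕ → Set (ℝ × ℝ)) (_ : A ⊆ ⋃ n, U n) (_ : ∀ n, diam (U n) ≤ r),
        ∑' n, ⨆ _ : (U n).Nonempty, diam (U n) ^ t) < ε := h3 ▸ hε
    simp only [iInf_lt_iff] at h4
    obtain ⟨U, hU1, hU2, h5⟩ := h4
    refine ⟨U, hU1, hU2, ?_⟩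
    have heq : ∀ n, diam (U n) ^ t = ⨆ _ : (U n).Nonempty, diam (U n) ^ t := by
      intro n
      rcases eq_empty_or_nonempty (U n) with h | h
      · simp [h, EMetric.diam, ENNReal.zero_rpow_of_pos ht0]
      · simp [h]
    calc ∑' n, diam (U n) ^ t = ∑' n, ⨆ _ : (U n).Nonempty, diam (U n) ^ t :=
          tsum_congr heq
      _ ≤ ε := h5.le
  -- choose a sequence of covers
  have h6 : ∀ n : ℕ, ∃ U : ℕ → Set (ℝ × ℝ), (A ⊆ ⋃ i, U i) ∧
      (∀ i, diam (U i) ≤ min ((n : ℝ≥0∞))⁻¹ 1) ∧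
      ∑' i, diam (U i) ^ t ≤ (2 : ℝ≥0∞)⁻¹ ^ n := by
    intro n
    refine h1 _ ?_ _ ?_
    · simp [ENNReal.inv_pos, ENNReal.natCast_ne_top]
    · exact ENNReal.pow_pos (by norm_num) n
  choose U hU1 hU2 hU3 using h6
  have hUdiam_ne_top : ∀ n i, diam (U n i) ≠ ∞ := fun n i =>
    ((hU2 n i).trans (min_le_right _ _)).trans_lt (by norm_num) |>.ne
  -- the dominating functions
  set g : ℕ → ℝ → ℝ≥0∞ := fun n y =>
    ∑' i, (closure (f '' U n i)).indicator (fun _ => diam (U n i) ^ (t - 1)) y with hg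
  have meas_g : ∀ n, Measurable (g n) := fun n =>
    Measurable.ennreal_tsum fun i =>
      measurable_const.indicator isClosed_closure.measurableSet
  -- integral bound
  have hint : ∀ n, ∫⁻ y, g n y ≤ K * (2 : ℝ≥0∞)⁻¹ ^ n := by
    intro n
    rw [hg]
    simp only
    rw [lintegral_tsum fun i =>
      (measurable_const.indicator isClosed_closure.measurableSet).aemeasurable]
    have hterm : ∀ i, (∫⁻ y, (closure (f '' U n i)).indicator
        (fun _ => diam (U n i) ^ (t - 1)) y) ≤ (K : ℝ≥0∞) * diam (U n i) ^ t := by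
      intro i
      rw [lintegral_indicator_const isClosed_closure.measurableSet]
      have hv : volume (closure (f '' U n i)) ≤ (K : ℝ≥0∞) * diam (U n i) :=
        (Real.volume_le_diam _).trans ((diam_closure _).le.trans (hf.ediam_image_le _))
      calc diam (U n i) ^ (t - 1) * volume (closure (f '' U n i))
          ≤ diam (U n i) ^ (t - 1) * ((K : ℝ≥0∞) * diam (U n i)) :=
            mul_le_mul_right hv _
        _ = (K : ℝ≥0∞) * (diam (U n i) ^ (t - 1) * diam (U n i)) := by ring
        _ = (K : ℝ≥0∞) * diam (U n i) ^ t := by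
            congr 1
            rcases eq_or_ne (diam (U n i)) 0 with h | h
            · rw [h, ENNReal.zero_rpow_of_pos ht1, ENNReal.zero_rpow_of_pos ht0, zero_mul]
            · have hr := ENNReal.rpow_add (t - 1) 1 h (hUdiam_ne_top n i)
              rw [ENNReal.rpow_one] at hr
              rw [← hr, sub_add_cancel]
    calc (∑' i, ∫⁻ y, (closure (f '' U n i)).indicator
          (fun _ => diam (U n i) ^ (t - 1)) y)
        ≤ ∑' i, (K : ℝ≥0∞) * diam (U n i) ^ t := ENNReal.tsum_le_tsum hterm
      _ = (K : ℝ≥0∞) * ∑' i, diam (U n i) ^ t := ENNReal.tsum_mul_left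
      _ ≤ (K : ℝ≥0∞) * (2 : ℝ≥0∞)⁻¹ ^ n := mul_le_mul_right (hU3 n) _
  -- liminf of g is zero a.e.
  have hlim : ∀ᵐ y : ℝ ∂volume, liminf (fun n => g n y) atTop = 0 := by
    have h7 : (∫⁻ y, liminf (fun n => g n y) atTop) = 0 := by
      refine le_antisymm ?_ zero_le
      refine (lintegral_liminf_le meas_g).trans ?_
      have h8 : Tendsto (fun n : ℕ => (K : ℝ≥0∞) * (2 : ℝ≥0∞)⁻¹ ^ n) atTop (nhds 0) := by
        have := ENNReal.Tendsto.const_mul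
          (ENNReal.tendsto_pow_atTop_nhds_zero_of_lt_one
            (by norm_num : (2 : ℝ≥0∞)⁻¹ < 1)) (a := (K : ℝ≥0∞))
          (Or.inr ENNReal.coe_ne_top)
        simpa using this
      calc liminf (fun n => ∫⁻ y, g n y) atTop
          ≤ liminf (fun n : ℕ => (K : ℝ≥0∞) * (2 : ℝ≥0∞)⁻¹ ^ n) atTop :=
            liminf_le_liminf (Eventually.of_forall hint)
        _ = 0 := h8.liminf_eq
    have h9 := (lintegral_eq_zero_iff (Measurable.liminf meas_g)).1 h7
    filter_upwards [h9] with y hy using hy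
  filter_upwards [hlim] with y hy
  refine le_antisymm ?_ zero_le
  -- cover of the slice
  set V : ℕ → ℕ → Set (ℝ × ℝ) := fun n i =>
    if (U n i ∩ f ⁻¹' {y}).Nonempty then U n i else ∅ with hV
  have hcover : ∀ n, A ∩ f ⁻¹' {y} ⊆ ⋃ i, V n i := by
    intro n x hx
    obtain ⟨i, hi⟩ := mem_iUnion.1 (hU1 n hx.1)
    refine mem_iUnion.2 ⟨i, ?_⟩
    have hne : (U n i ∩ f ⁻¹' {y}).Nonempty := ⟨x, hi, hx.2⟩
    simp only [hV]
    rw [if_pos hne]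
    exact hi
  have hVdiam : ∀ n i, diam (V n i) ≤ (n : ℝ≥0∞)⁻¹ := by
    intro n i
    simp only [hV]
    split
    · exact (hU2 n i).trans (min_le_left _ _)
    · simp [EMetric.diam]
  have hmain := Measure.hausdorffMeasure_le_liminf_tsum (t - 1) (A ∩ f ⁻¹' {y})
    (fun n : ℕ => ((n : ℝ≥0∞))⁻¹) ENNReal.tendsto_inv_nat_nhds_zero V
    (Eventually.of_forall hVdiam) (Eventually.of_forall hcover)
  refine hmain.trans ?_
  have hterm : ∀ n, (∑' i, diam (V n i) ^ (t - 1)) ≤ g n y := by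
    intro n
    refine ENNReal.tsum_le_tsum fun i => ?_
    simp only [hV]
    split
    · rename_i h
      obtain ⟨x, hxU, hxf⟩ := h
      have hy' : y ∈ closure (f '' U n i) :=
        subset_closure ⟨x, hxU, mem_singleton_iff.1 hxf⟩
      rw [indicator_of_mem hy']
    · simp [EMetric.diam, ENNReal.zero_rpow_of_pos ht1]
  calc liminf (fun n => ∑' i, diam (V n i) ^ (t - 1)) atTop
      ≤ liminf (fun n => g n y) atTop := liminf_le_liminf (Eventually.of_forall hterm)
    _ = 0 := hy

theorem stmt_12 (F : Set (ℝ × ℝ)) (hF : MeasurableSet F) (s : ℝ) (hs : 1 ≤ s)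
    (hdim : dimH F ≤ ENNReal.ofReal s) :
    ∀ θ ∈ Icc (0:ℝ) (2 * π), ∀ᵐ y : ℝ ∂volume,
      dimH (F ∩ (fun p : ℝ × ℝ => p.1 * Real.cos θ + p.2 * Real.sin θ) ⁻¹' {y}) ≤
        ENNReal.ofReal (s - 1) := by
  intro θ _
  set f : ℝ × ℝ → ℝ := fun p => p.1 * Real.cos θ + p.2 * Real.sin θ with hfdef
  have hf : LipschitzWith 2 f := by
    refine LipschitzWith.of_dist_le_mul fun p q => ?_
    rw [Prod.dist_eq, Real.dist_eq, Real.dist_eq, Real.dist_eq, hfdef]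
    simp only
    have h1 : |p.1 * Real.cos θ + p.2 * Real.sin θ - (q.1 * Real.cos θ + q.2 * Real.sin θ)|
        = |(p.1 - q.1) * Real.cos θ + (p.2 - q.2) * Real.sin θ| := by ring_nf
    rw [h1]
    have h2 := abs_add_le ((p.1 - q.1) * Real.cos θ) ((p.2 - q.2) * Real.sin θ)
    rw [abs_mul, abs_mul] at h2
    have hc := Real.abs_cos_le_one θ
    have hsn := Real.abs_sin_le_one θ
    have h3 : |p.1 - q.1| ≤ |p.1 - q.1| ⊔ |p.2 - q.2| := le_max_left _ _
    have h4 : |p.2 - q.2| ≤ |p.1 - q.1| ⊔ |p.2 - q.2| := le_max_right _ _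
    have h5 : (0:ℝ) ≤ |p.1 - q.1| := abs_nonneg _
    have h6 : (0:ℝ) ≤ |p.2 - q.2| := abs_nonneg _
    push_cast
    nlinarith [abs_nonneg (Real.cos θ), abs_nonneg (Real.sin θ)]
  -- for each n, the slice has zero (s + 1/(n+1) - 1)-measure a.e.
  have key : ∀ n : ℕ, ∀ᵐ y : ℝ ∂volume,
      μH[s + 1 / (n + 1) - 1] (F ∩ f ⁻¹' {y}) = 0 := by
    intro n
    have hpos : (0:ℝ) < 1 / (n + 1) := by positivity
    have ht : 1 < s + 1 / (n + 1) := by linarith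
    have hts : (0:ℝ) < s + 1 / (n + 1) := by linarith
    have hzero : μH[s + 1 / (n + 1)] F = 0 := by
      have hd : dimH F < ((s + 1 / (n + 1)).toNNReal : ℝ≥0∞) := by
        refine lt_of_le_of_lt hdim ?_
        rw [← ENNReal.ofReal, ENNReal.ofReal_lt_ofReal_iff hts]
        linarith
      have := hausdorffMeasure_of_dimH_lt hd
      rwa [Real.coe_toNNReal _ (by linarith)] at this
    exact slice_lemma_aux hf ht hzero
  have key2 : ∀ᵐ y : ℝ ∂volume, ∀ n : ℕ,
      μH[s + 1 / (n + 1) - 1] (F ∩ f ⁻¹' {y}) = 0 := ae_all_iff.2 key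
  filter_upwards [key2] with y hy
  refine ENNReal.le_of_forall_pos_le_add fun ε hε _ => ?_
  obtain ⟨n, hn⟩ := exists_nat_one_div_lt (show (0:ℝ) < ε from hε)
  have hdn : dimH (F ∩ f ⁻¹' {y}) ≤ (((s + 1 / (n + 1) - 1).toNNReal : ℝ≥0) : ℝ≥0∞) := by
    refine dimH_le_of_hausdorffMeasure_ne_top ?_
    have hp1 : (0:ℝ) < 1 / ((n:ℝ) + 1) := by positivity
    rw [Real.coe_toNNReal _ (by linarith)]
    rw [hy n]
    exact ENNReal.zero_ne_top
  refine hdn.trans ?_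
  rw [← ENNReal.ofReal]
  have h7 : s + 1 / (n + 1) - 1 = (s - 1) + 1 / (n + 1) := by ring
  rw [h7, ENNReal.ofReal_add (by linarith) (by positivity)]
  gcongr
  calc ENNReal.ofReal (1 / (n + 1)) ≤ ENNReal.ofReal ε := ENNReal.ofReal_le_ofReal hn.le
    _ = (ε : ℝ≥0∞) := ENNReal.ofReal_coe_nnreal
end

section
/- For any 0 < α < 1 there exist d ∈ ℕ and a map Φ : [0,1] → ℝ^d together with constants c₁, c₂ > 0 such that c₁|x - y|^α ≤ ‖Φ(x) - Φ(y)‖ ≤ c₂|x - y|^α for all x, y ∈ [0,1]. -/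
open Set Real Finset

namespace Stmt18Aux


lemma trig_lip (u : ℝ → ℝ) (hu : u = Real.cos ∨ u = Real.sin) (a b : ℝ) :
    |u a - u b| ≤ |a - b| := by
  have h1 : ∀ t, |Real.sin t| ≤ 1 := fun t => Real.abs_sin_le_one t
  have h2 : ∀ t, |Real.cos t| ≤ 1 := fun t => Real.abs_cos_le_one t
  have key : |Real.sin ((a - b)/2)| ≤ |a - b| / 2 := by
    have := Real.abs_sin_le_abs (x := (a - b)/2)
    rwa [abs_div, abs_two] at this
  rcases hu with rfl | rfl
  · rw [Real.cos_sub_cos]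
    have e : |(-2) * Real.sin ((a + b)/2) * Real.sin ((a - b)/2)|
        = 2 * |Real.sin ((a + b)/2)| * |Real.sin ((a - b)/2)| := by
      rw [abs_mul, abs_mul]; norm_num
    rw [e]
    nlinarith [h1 ((a+b)/2), key, abs_nonneg (Real.sin ((a-b)/2)), abs_nonneg (Real.sin ((a+b)/2))]
  · rw [Real.sin_sub_sin]
    have e : |2 * Real.sin ((a - b)/2) * Real.cos ((a + b)/2)|
        = 2 * |Real.sin ((a - b)/2)| * |Real.cos ((a + b)/2)| := by
      rw [abs_mul, abs_mul]; norm_num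
    rw [e]
    nlinarith [h2 ((a+b)/2), key, abs_nonneg (Real.sin ((a-b)/2)), abs_nonneg (Real.cos ((a+b)/2))]

lemma trig_bdd (u : ℝ → ℝ) (hu : u = Real.cos ∨ u = Real.sin) (t : ℝ) : |u t| ≤ 1 := by
  rcases hu with rfl | rfl
  · exact Real.abs_cos_le_one t
  · exact Real.abs_sin_le_one t

lemma summable_term {r : ℝ} (hr0 : 0 ≤ r) (hr1 : r < 1) {N : ℕ} (hN : N ≠ 0) (i : ℕ)
    (v : ℕ → ℝ) (hv : ∀ m, |v m| ≤ 2) :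
    Summable (fun m : ℕ => r ^ (i + m * N) * v m) := by
  apply Summable.of_norm_bounded (g := fun m => (2 * r ^ i) * (r ^ N) ^ m)
  · exact ((summable_geometric_of_lt_one (pow_nonneg hr0 N)
      (pow_lt_one₀ hr0 hr1 hN)).mul_left _)
  · intro m
    have : ‖r ^ (i + m * N) * v m‖ = r ^ (i + m * N) * |v m| := by
      rw [norm_mul, Real.norm_eq_abs, Real.norm_eq_abs, abs_of_nonneg (pow_nonneg hr0 _)]
    rw [this, pow_add, mul_comm m N, pow_mul]
    calc r ^ i * (r ^ N) ^ m * |v m| ≤ r ^ i * (r ^ N) ^ m * 2 := by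
          gcongr
          exact hv m
      _ = 2 * r ^ i * (r ^ N) ^ m := by ring



lemma rpow_pow_eq (α : ℝ) (n : ℕ) : ((2:ℝ)^(-α))^n = (((2:ℝ)^n)⁻¹) ^ α := by
  have h2 : (0:ℝ) ≤ 2 := by norm_num
  have l : ((2:ℝ)^(-α))^n = (2:ℝ) ^ (-α * n) := by
    rw [← Real.rpow_natCast ((2:ℝ)^(-α)) n, ← Real.rpow_mul h2]
  have rr : (((2:ℝ)^n)⁻¹) ^ α = (2:ℝ) ^ (-(n:ℝ) * α) := by
    rw [← Real.rpow_natCast (2:ℝ) n, ← Real.rpow_neg h2, ← Real.rpow_mul h2]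
  rw [l, rr]
  ring_nf

lemma basic_r {α : ℝ} (hα : 0 < α) (hα1 : α < 1) :
    0 < (2:ℝ)^(-α) ∧ (2:ℝ)^(-α) < 1 ∧ 1/2 < (2:ℝ)^(-α) := by
  refine ⟨Real.rpow_pos_of_pos two_pos _, ?_, ?_⟩
  · exact Real.rpow_lt_one_of_one_lt_of_neg one_lt_two (by linarith)
  · have : (2:ℝ) ^ (-1:ℝ) < (2:ℝ) ^ (-α) :=
      Real.rpow_lt_rpow_of_exponent_lt one_lt_two (by linarith)
    rwa [Real.rpow_neg_one, ← one_div] at this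

lemma upper_sum {α r δ : ℝ} (hα : 0 < α) (hα1 : α < 1) (hr : r = (2:ℝ) ^ (-α))
    (hδ : 0 < δ) (hδ1 : δ ≤ 1) :
    ∑' k : ℕ, r ^ k * min 2 (2 * π * 2 ^ k * δ)
      ≤ (8 * π * r / (2*r - 1) + 4 / (1 - r)) * δ ^ α := by
  obtain ⟨hr0, hr1, hhalf⟩ := basic_r hα hα1 (α := α)
  rw [← hr] at hr0 hr1 hhalf
  obtain ⟨m, hm1, hm2⟩ := exists_nat_pow_near (show (1:ℝ) ≤ 1/δ by
    rw [le_div_iff₀ hδ]; linarith) one_lt_two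
  have hδ2m : δ * 2^m ≤ 1 := by
    rw [le_div_iff₀ hδ] at hm1; linarith
  have hrm : r ^ m ≤ 2 * δ ^ α := by
    have h1 : ((2:ℝ)^m)⁻¹ ≤ 2 * δ := by
      rw [inv_le_iff_one_le_mul₀ (by positivity)]
      have : (1:ℝ)/δ < 2 * 2^m := by
        calc (1:ℝ)/δ < 2^(m+1) := hm2
          _ = 2 * 2^m := by rw [pow_succ]; ring
      rw [div_lt_iff₀ hδ] at this
      nlinarith
    calc r ^ m = (((2:ℝ)^m)⁻¹) ^ α := by rw [hr]; exact rpow_pow_eq α m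
      _ ≤ (2*δ) ^ α := Real.rpow_le_rpow (by positivity) h1 hα.le
      _ = 2^α * δ^α := Real.mul_rpow (by norm_num) hδ.le
      _ ≤ 2 * δ^α := by
          apply mul_le_mul_of_nonneg_right _ (Real.rpow_nonneg hδ.le α)
          calc (2:ℝ)^α ≤ (2:ℝ)^(1:ℝ) :=
              Real.rpow_le_rpow_of_exponent_le one_le_two hα1.le
            _ = 2 := Real.rpow_one 2
  set f : ℕ → ℝ := fun k => r ^ k * min 2 (2 * π * 2 ^ k * δ) with hf_def
  have hfnn : ∀ k, 0 ≤ f k := by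
    intro k
    apply mul_nonneg (pow_nonneg hr0.le _)
    apply le_min (by norm_num) (by positivity)
  have hfle : ∀ k, f k ≤ 2 * r ^ k := by
    intro k
    calc f k ≤ r ^ k * 2 := by
          apply mul_le_mul_of_nonneg_left (min_le_left _ _) (pow_nonneg hr0.le _)
      _ = 2 * r ^ k := by ring
  have hf : Summable f := by
    apply Summable.of_norm_bounded (g := fun k => 2 * r ^ k)
      ((summable_geometric_of_lt_one hr0.le hr1).mul_left 2)
    intro k
    rw [Real.norm_eq_abs, abs_of_nonneg (hfnn k)]
    exact hfle k
  rw [← Summable.sum_add_tsum_nat_add (m+1) hf]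
  have h2r1 : (0:ℝ) < 2*r - 1 := by linarith
  have hA : ∑ k ∈ Finset.range (m+1), f k ≤ 8 * π * r / (2*r - 1) * δ ^ α := by
    have step1 : ∑ k ∈ Finset.range (m+1), f k
        ≤ ∑ k ∈ Finset.range (m+1), (2*π*δ) * (2*r)^k := by
      apply Finset.sum_le_sum
      intro k _
      calc f k ≤ r ^ k * (2 * π * 2 ^ k * δ) := by
            apply mul_le_mul_of_nonneg_left (min_le_right _ _) (pow_nonneg hr0.le _)
        _ = (2*π*δ) * (2*r)^k := by rw [mul_pow]; ring
    have step2 : ∑ k ∈ Finset.range (m+1), (2*π*δ) * (2*r)^k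
        = (2*π*δ) * (((2*r)^(m+1) - 1)/(2*r - 1)) := by
      rw [← Finset.mul_sum, geom_sum_eq (by linarith : (2:ℝ)*r ≠ 1)]
    have hd : δ * (2*r)^(m+1) ≤ 4 * r * δ ^ α := by
      have e1 : δ * (2*r)^(m+1) = (2*r) * ((δ * 2^m) * r^m) := by
        rw [mul_pow, pow_succ (2:ℝ) m, pow_succ r m]; ring
      rw [e1]
      have h2 : (δ * 2^m) * r^m ≤ 1 * (2 * δ^α) :=
        mul_le_mul hδ2m hrm (pow_nonneg hr0.le m) one_pos.le
      calc (2*r) * ((δ * 2^m) * r^m) ≤ (2*r) * (1 * (2*δ^α)) := by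
            apply mul_le_mul_of_nonneg_left h2 (by linarith)
        _ = 4 * r * δ^α := by ring
    calc ∑ k ∈ Finset.range (m+1), f k
        ≤ (2*π*δ) * (((2*r)^(m+1) - 1)/(2*r - 1)) := step1.trans step2.le
      _ ≤ (2*π*δ) * ((2*r)^(m+1)/(2*r - 1)) := by
          apply mul_le_mul_of_nonneg_left _ (by positivity)
          apply (div_le_div_iff_of_pos_right h2r1).2
          linarith
      _ = (2*π) * (δ * (2*r)^(m+1)) / (2*r-1) := by ring
      _ ≤ (2*π) * (4 * r * δ^α) / (2*r-1) := by
          apply (div_le_div_iff_of_pos_right h2r1).2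
          exact mul_le_mul_of_nonneg_left hd (by positivity)
      _ = 8 * π * r / (2*r - 1) * δ ^ α := by ring
  have hB : ∑' k : ℕ, f (k + (m+1)) ≤ 4 / (1 - r) * δ ^ α := by
    have hs1 : Summable (fun k => f (k + (m+1))) := (summable_nat_add_iff (m+1)).2 hf
    have hs2 : Summable (fun k : ℕ => (2 * r^(m+1)) * r ^ k) :=
      (summable_geometric_of_lt_one hr0.le hr1).mul_left _
    have step1 : ∑' k : ℕ, f (k + (m+1)) ≤ ∑' k : ℕ, (2 * r^(m+1)) * r ^ k := by
      apply Summable.tsum_le_tsum _ hs1 hs2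
      intro k
      calc f (k + (m+1)) ≤ 2 * r ^ (k + (m+1)) := hfle _
        _ = (2 * r^(m+1)) * r ^ k := by rw [pow_add]; ring
    have step2 : ∑' k : ℕ, (2 * r^(m+1)) * r ^ k = (2 * r^(m+1)) * (1-r)⁻¹ := by
      rw [tsum_mul_left, tsum_geometric_of_lt_one hr0.le hr1]
    have hrm1 : r ^ (m+1) ≤ 2 * δ^α := by
      calc r ^ (m+1) = r^m * r := pow_succ r m
        _ ≤ (2*δ^α) * 1 := mul_le_mul hrm hr1.le hr0.le (by positivity)
        _ = 2*δ^α := by ring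
    calc ∑' k : ℕ, f (k + (m+1)) ≤ (2 * r^(m+1)) * (1-r)⁻¹ := step1.trans step2.le
      _ ≤ (2 * (2*δ^α)) * (1-r)⁻¹ := by
          apply mul_le_mul_of_nonneg_right (by linarith [hrm1]) (inv_nonneg.2 (by linarith))
      _ = 4 / (1 - r) * δ ^ α := by
          rw [div_eq_mul_inv]; ring
  calc ∑ k ∈ Finset.range (m+1), f k + ∑' k : ℕ, f (k + (m+1))
      ≤ 8 * π * r / (2*r - 1) * δ ^ α + 4 / (1 - r) * δ ^ α := add_le_add hA hB
    _ = (8 * π * r / (2*r - 1) + 4 / (1 - r)) * δ ^ α := by ring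



noncomputable def S (r : ℝ) (N i : ℕ) (u : ℝ → ℝ) (x : ℝ) : ℝ :=
  ∑' m : ℕ, r ^ (i + m * N) * u (2 * π * 2 ^ (i + m * N) * x)

lemma S_sub {r : ℝ} (hr0 : 0 ≤ r) (hr1 : r < 1) {N : ℕ} (hN : N ≠ 0) (i : ℕ)
    (u : ℝ → ℝ) (hu : ∀ t, |u t| ≤ 1) (x y : ℝ) :
    S r N i u x - S r N i u y
      = ∑' m : ℕ, r ^ (i + m * N) *
          (u (2 * π * 2 ^ (i + m * N) * x) - u (2 * π * 2 ^ (i + m * N) * y)) := by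
  unfold S
  rw [← Summable.tsum_sub
    (summable_term hr0 hr1 hN i _ (fun m => (hu _).trans one_le_two))
    (summable_term hr0 hr1 hN i _ (fun m => (hu _).trans one_le_two))]
  congr 1
  funext m
  ring

lemma coord_lower {r : ℝ} (hr0 : 0 < r) (hr1 : r < 1) {N : ℕ} (hN : N ≠ 0)
    (hrN : r ^ N ≤ 1/100) (h2rN : (100:ℝ) ≤ (2*r) ^ N)
    (i m₀ n : ℕ) (hn : n = i + m₀ * N)
    (u : ℝ → ℝ) (hu : ∀ t, |u t| ≤ 1)
    (hlip : ∀ a b, |u a - u b| ≤ |a - b|) (x y : ℝ)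
    (hθ2 : 2 ^ n * |x - y| ≤ 1/2)
    (hmain : 1 ≤ |u (2 * π * 2 ^ n * x) - u (2 * π * 2 ^ n * y)|) :
    r ^ n / 2 ≤ |S r N i u x - S r N i u y| := by
  set δ := |x - y| with hδdef
  have hδ0 : 0 ≤ δ := abs_nonneg _
  have hπ : 0 < π := Real.pi_pos
  set a : ℕ → ℝ := fun m => r ^ (i + m * N) *
      (u (2 * π * 2 ^ (i + m * N) * x) - u (2 * π * 2 ^ (i + m * N) * y)) with ha_def
  have hdiff2 : ∀ k : ℕ, |u (2 * π * (2:ℝ) ^ k * x) - u (2 * π * 2 ^ k * y)| ≤ 2 := by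
    intro k
    calc |u (2 * π * (2:ℝ) ^ k * x) - u (2 * π * 2 ^ k * y)|
        ≤ |u (2 * π * (2:ℝ) ^ k * x)| + |u (2 * π * 2 ^ k * y)| := abs_sub _ _
      _ ≤ 1 + 1 := add_le_add (hu _) (hu _)
      _ = 2 := by norm_num
  have hdifflip : ∀ k : ℕ, |u (2 * π * (2:ℝ) ^ k * x) - u (2 * π * 2 ^ k * y)|
      ≤ 2 * π * 2 ^ k * δ := by
    intro k
    calc |u (2 * π * (2:ℝ) ^ k * x) - u (2 * π * 2 ^ k * y)|
        ≤ |2 * π * (2:ℝ) ^ k * x - 2 * π * 2 ^ k * y| := hlip _ _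
      _ = |2 * π * (2:ℝ) ^ k * (x - y)| := by ring_nf
      _ = 2 * π * 2 ^ k * δ := by
          rw [abs_mul, abs_of_nonneg (by positivity : (0:ℝ) ≤ 2 * π * 2 ^ k)]
  have ha : Summable a := summable_term hr0.le hr1 hN i _ (fun m => hdiff2 _)
  have hsplit := Summable.tsum_eq_add_tsum_ite ha m₀
  have hS : S r N i u x - S r N i u y = a m₀ + ∑' m : ℕ, if m = m₀ then 0 else a m := by
    rw [S_sub hr0.le hr1 hN i u hu x y, ← ha_def, hsplit]
  have ham₀ : r ^ n ≤ |a m₀| := by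
    have : a m₀ = r ^ n * (u (2 * π * 2 ^ n * x) - u (2 * π * 2 ^ n * y)) := by
      rw [ha_def, hn]
    rw [this, abs_mul, abs_of_nonneg (by positivity : (0:ℝ) ≤ r ^ n)]
    nlinarith [pow_pos hr0 n]
  -- bound the rest
  set R := ∑' m : ℕ, if m = m₀ then 0 else a m with hR_def
  have hQ : (1:ℝ) < 2 * r → True := fun _ => trivial
  set H : ℕ → ℝ := fun m =>
    if m < m₀ then (2 * π * δ) * (2*r) ^ (i + m * N)
    else if m = m₀ then 0 else 2 * r ^ (i + m * N) with hH_def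
  have hHshift : (fun m : ℕ => H (m + (m₀ + 1)))
      = fun m : ℕ => (2 * r ^ (i + (m₀+1) * N)) * (r ^ N) ^ m := by
    funext m
    have h1 : ¬ (m + (m₀ + 1) < m₀) := by omega
    have h2 : ¬ (m + (m₀ + 1) = m₀) := by omega
    rw [hH_def]
    simp only [h1, h2, if_false]
    rw [show i + (m + (m₀ + 1)) * N = (i + (m₀ + 1) * N) + m * N by ring,
      pow_add, mul_comm m N, pow_mul]
    ring
  have hHsum : Summable H := by
    apply (summable_nat_add_iff (m₀+1)).1
    rw [hHshift]
    exact (summable_geometric_of_lt_one (pow_nonneg hr0.le N)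
      (pow_lt_one₀ hr0.le hr1 hN)).mul_left _
  have habs_le_H : ∀ m : ℕ, |if m = m₀ then 0 else a m| ≤ H m := by
    intro m
    rcases lt_trichotomy m m₀ with h | h | h
    · rw [if_neg h.ne, hH_def]
      simp only [h, if_true]
      rw [ha_def, abs_mul, abs_of_nonneg (by positivity : (0:ℝ) ≤ r ^ (i + m * N))]
      calc r ^ (i + m * N) * |u (2 * π * 2 ^ (i + m * N) * x) - u (2 * π * 2 ^ (i + m * N) * y)|
          ≤ r ^ (i + m * N) * (2 * π * 2 ^ (i + m * N) * δ) := by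
            apply mul_le_mul_of_nonneg_left (hdifflip _) (by positivity)
        _ = (2 * π * δ) * (2*r) ^ (i + m * N) := by rw [mul_pow]; ring
    · rw [if_pos h, hH_def]
      simp only [h]
      have : ¬ (m₀ < m₀) := lt_irrefl _
      simp [this]
    · rw [if_neg h.ne', hH_def]
      have h1 : ¬ (m < m₀) := by omega
      have h2 : ¬ (m = m₀) := by omega
      simp only [h1, h2, if_false]
      rw [ha_def, abs_mul, abs_of_nonneg (by positivity : (0:ℝ) ≤ r ^ (i + m * N))]
      calc r ^ (i + m * N) * |u (2 * π * 2 ^ (i + m * N) * x) - u (2 * π * 2 ^ (i + m * N) * y)|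
          ≤ r ^ (i + m * N) * 2 := by
            apply mul_le_mul_of_nonneg_left (hdiff2 _) (by positivity)
        _ = 2 * r ^ (i + m * N) := by ring
  have hite_sum : Summable (fun m : ℕ => ‖if m = m₀ then 0 else a m‖) := by
    apply Summable.of_nonneg_of_le (fun m => norm_nonneg _) _ hHsum
    intro m
    rw [Real.norm_eq_abs]
    exact habs_le_H m
  have hRbound : |R| ≤ π * r ^ n / 99 + 2 * r ^ n / 99 := by
    have step1 : |R| ≤ ∑' m : ℕ, ‖if m = m₀ then 0 else a m‖ := by
      rw [hR_def, ← Real.norm_eq_abs]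
      exact norm_tsum_le_tsum_norm hite_sum
    have step2 : ∑' m : ℕ, ‖if m = m₀ then 0 else a m‖ ≤ ∑' m : ℕ, H m := by
      apply Summable.tsum_le_tsum _ hite_sum hHsum
      intro m
      rw [Real.norm_eq_abs]
      exact habs_le_H m
    have step3 : ∑' m : ℕ, H m ≤ π * r ^ n / 99 + 2 * r ^ n / 99 := by
      rw [← Summable.sum_add_tsum_nat_add (m₀+1) hHsum]
      have hlow : ∑ m ∈ Finset.range (m₀+1), H m ≤ π * r ^ n / 99 := by
        rw [Finset.sum_range_succ]
        have hHm₀ : H m₀ = 0 := by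
          rw [hH_def]; simp
        rw [hHm₀, add_zero]
        have heq : ∀ m ∈ Finset.range m₀, H m = ((2 * π * δ) * (2*r)^i) * ((2*r)^N) ^ m := by
          intro m hm
          rw [Finset.mem_range] at hm
          rw [hH_def]
          simp only [hm, if_true]
          rw [pow_add, mul_comm m N, pow_mul]
          ring
        rw [Finset.sum_congr rfl heq, ← Finset.mul_sum]
        have hQ1 : (1:ℝ) < (2*r)^N := lt_of_lt_of_le (by norm_num) h2rN
        have hgs : ∑ m ∈ Finset.range m₀, ((2*r)^N) ^ m ≤ ((2*r)^N) ^ m₀ / 99 := by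
          rw [geom_sum_eq hQ1.ne']
          calc (((2*r)^N) ^ m₀ - 1) / ((2*r)^N - 1) ≤ (((2*r)^N) ^ m₀ - 1) / 99 := by
                apply div_le_div_of_nonneg_left _ (by norm_num) (by linarith)
                nlinarith [one_le_pow₀ hQ1.le (n := m₀)]
            _ ≤ ((2*r)^N) ^ m₀ / 99 := by
                apply div_le_div_of_nonneg_right _ (by norm_num)
                linarith
        have h2rn : ((2*r):ℝ)^i * ((2*r)^N) ^ m₀ = (2*r)^n := by
          rw [← pow_mul, ← pow_add, hn, mul_comm N m₀]
        have hfin : (2 * π * δ) * (2*r)^i * (((2*r)^N) ^ m₀ / 99) ≤ π * r ^ n / 99 := by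
          have e : (2 * π * δ) * (2*r)^i * (((2*r)^N) ^ m₀ / 99)
              = (2 * π) * (δ * ((2*r)^i * ((2*r)^N) ^ m₀)) / 99 := by ring
          rw [e, h2rn]
          have e2 : δ * (2*r)^n = (2^n * δ) * r^n := by
            rw [mul_pow]; ring
          rw [e2]
          have : (2 * π) * ((2^n * δ) * r^n) ≤ (2 * π) * ((1/2) * r^n) := by
            apply mul_le_mul_of_nonneg_left _ (by positivity)
            apply mul_le_mul_of_nonneg_right hθ2 (by positivity)
          calc (2 * π) * ((2^n * δ) * r^n) / 99 ≤ (2 * π) * ((1/2) * r^n) / 99 := by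
                apply div_le_div_of_nonneg_right this (by norm_num)
            _ = π * r ^ n / 99 := by ring
        calc (2 * π * δ) * (2*r)^i * ∑ m ∈ Finset.range m₀, ((2*r)^N) ^ m
            ≤ (2 * π * δ) * (2*r)^i * (((2*r)^N) ^ m₀ / 99) := by
              apply mul_le_mul_of_nonneg_left hgs (by positivity)
          _ ≤ π * r ^ n / 99 := hfin
      have hhigh : ∑' m : ℕ, H (m + (m₀+1)) ≤ 2 * r ^ n / 99 := by
        rw [hHshift, tsum_mul_left, tsum_geometric_of_lt_one (pow_nonneg hr0.le N)
          (pow_lt_one₀ hr0.le hr1 hN)]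
        have hrn' : r ^ (i + (m₀+1) * N) = r ^ n * r ^ N := by
          rw [← pow_add, hn]; ring_nf
        rw [hrn']
        have hinv : (1 - r ^ N)⁻¹ ≤ 100/99 := by
          rw [inv_le_comm₀ (by nlinarith [pow_pos hr0 N]) (by norm_num)]
          linarith
        have h1 : r ^ n * r ^ N ≤ r ^ n * (1/100) := by
          apply mul_le_mul_of_nonneg_left hrN (by positivity)
        calc 2 * (r ^ n * r ^ N) * (1 - r ^ N)⁻¹
            ≤ 2 * (r ^ n * (1/100)) * (100/99) := by
              apply mul_le_mul (by linarith) hinv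
                (inv_nonneg.2 (by nlinarith [pow_pos hr0 N])) (by positivity)
          _ = 2 * r ^ n / 99 := by ring
      exact add_le_add hlow hhigh
    calc |R| ≤ ∑' m : ℕ, H m := step1.trans step2
      _ ≤ _ := step3
  have hfinal : r ^ n - (π * r ^ n / 99 + 2 * r ^ n / 99) ≤ |S r N i u x - S r N i u y| := by
    rw [hS]
    have habs := abs_add_le (a m₀ + R) (-R)
    rw [add_neg_cancel_right, abs_neg] at habs
    have : |a m₀| - |R| ≤ |a m₀ + R| := by linarith
    calc r ^ n - (π * r ^ n / 99 + 2 * r ^ n / 99) ≤ |a m₀| - |R| := by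
          have := hRbound; linarith [ham₀]
      _ ≤ |a m₀ + R| := this
  have hπ4 := Real.pi_le_four
  have hrn0 : (0:ℝ) ≤ r ^ n := by positivity
  nlinarith [hfinal]



lemma trig_main {x y : ℝ} (n : ℕ) (hθ1 : 1/4 < 2^n * |x - y|) (hθ2 : 2^n * |x - y| ≤ 1/2) :
    1 ≤ |Real.cos (2*π*2^n*x) - Real.cos (2*π*2^n*y)| ∨
    1 ≤ |Real.sin (2*π*2^n*x) - Real.sin (2*π*2^n*y)| := by
  have hπ := Real.pi_pos
  set A := 2*π*(2:ℝ)^n*x with hA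
  set B := 2*π*(2:ℝ)^n*y with hB
  have hH : |(A - B)/2| = π * (2^n * |x - y|) := by
    have : (A - B)/2 = π * (2^n * (x - y)) := by rw [hA, hB]; ring
    rw [this, abs_mul, abs_mul, abs_of_nonneg hπ.le,
      abs_of_nonneg (by positivity : (0:ℝ) ≤ (2:ℝ)^n)]
  have hHle : |(A - B)/2| ≤ π/2 := by rw [hH]; nlinarith
  have hHge : π/4 ≤ |(A - B)/2| := by rw [hH]; nlinarith
  have hsinabs : |Real.sin ((A - B)/2)| = Real.sin |(A - B)/2| := by
    rcases le_or_gt 0 ((A - B)/2) with h | h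
    · rw [abs_of_nonneg h, abs_of_nonneg (Real.sin_nonneg_of_nonneg_of_le_pi h
        (by rw [abs_of_nonneg h] at hHle; linarith))]
    · have e : Real.sin ((A - B)/2) = -Real.sin (-((A - B)/2)) := by
        rw [Real.sin_neg]; ring
      rw [abs_of_neg h] at hHle ⊢
      rw [e, abs_neg, abs_of_nonneg (Real.sin_nonneg_of_nonneg_of_le_pi
        (by linarith) (by linarith))]
  have hsinH : √2/2 ≤ |Real.sin ((A - B)/2)| := by
    rw [hsinabs, ← Real.sin_pi_div_four]
    apply Real.strictMonoOn_sin.monotoneOn _ _ hHge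
    · constructor <;> [linarith; linarith]
    · constructor
      · linarith [abs_nonneg ((A-B)/2)]
      · exact hHle
  have hsq2 : (√2) ^ 2 = 2 := Real.sq_sqrt (by norm_num)
  have hsq2' : (0:ℝ) ≤ √2 := Real.sqrt_nonneg 2
  have hdisj : √2/2 ≤ |Real.sin ((A + B)/2)| ∨ √2/2 ≤ |Real.cos ((A + B)/2)| := by
    by_contra h
    push_neg at h
    obtain ⟨h1, h2⟩ := h
    have hsc := Real.sin_sq_add_cos_sq ((A + B)/2)
    nlinarith [sq_abs (Real.sin ((A + B)/2)), sq_abs (Real.cos ((A + B)/2)),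
      abs_nonneg (Real.sin ((A + B)/2)), abs_nonneg (Real.cos ((A + B)/2))]
  rcases hdisj with h | h
  · left
    rw [Real.cos_sub_cos]
    have e : |(-2) * Real.sin ((A + B)/2) * Real.sin ((A - B)/2)|
        = 2 * |Real.sin ((A + B)/2)| * |Real.sin ((A - B)/2)| := by
      rw [abs_mul, abs_mul]; norm_num
    rw [e]
    nlinarith [abs_nonneg (Real.sin ((A + B)/2)), abs_nonneg (Real.sin ((A - B)/2))]
  · right
    rw [Real.sin_sub_sin]
    have e : |2 * Real.sin ((A - B)/2) * Real.cos ((A + B)/2)|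
        = 2 * |Real.sin ((A - B)/2)| * |Real.cos ((A + B)/2)| := by
      rw [abs_mul, abs_mul]; norm_num
    rw [e]
    nlinarith [abs_nonneg (Real.cos ((A + B)/2)), abs_nonneg (Real.sin ((A - B)/2))]



lemma coord_upper {α r : ℝ} (hα : 0 < α) (hα1 : α < 1) (hr : r = (2:ℝ)^(-α))
    {N : ℕ} (hN : N ≠ 0) (i : ℕ) (u : ℝ → ℝ) (hu : ∀ t, |u t| ≤ 1)
    (hlip : ∀ a b, |u a - u b| ≤ |a - b|) (x y : ℝ)
    (hδ0 : 0 < |x - y|) (hδ1 : |x - y| ≤ 1) :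
    |S r N i u x - S r N i u y|
      ≤ (8 * π * r / (2*r - 1) + 4 / (1 - r)) * |x - y| ^ α := by
  obtain ⟨hr0, hr1, hhalf⟩ := basic_r hα hα1
  rw [← hr] at hr0 hr1 hhalf
  have hπ := Real.pi_pos
  set δ := |x - y| with hδdef
  rw [S_sub hr0.le hr1 hN i u hu x y]
  set a : ℕ → ℝ := fun m => r ^ (i + m * N) *
      (u (2 * π * 2 ^ (i + m * N) * x) - u (2 * π * 2 ^ (i + m * N) * y)) with ha_def
  have hdiff2 : ∀ k : ℕ, |u (2 * π * (2:ℝ) ^ k * x) - u (2 * π * 2 ^ k * y)| ≤ 2 := by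
    intro k
    calc |u (2 * π * (2:ℝ) ^ k * x) - u (2 * π * 2 ^ k * y)|
        ≤ |u (2 * π * (2:ℝ) ^ k * x)| + |u (2 * π * 2 ^ k * y)| := abs_sub _ _
      _ ≤ 1 + 1 := add_le_add (hu _) (hu _)
      _ = 2 := by norm_num
  have hdifflip : ∀ k : ℕ, |u (2 * π * (2:ℝ) ^ k * x) - u (2 * π * 2 ^ k * y)|
      ≤ 2 * π * 2 ^ k * δ := by
    intro k
    calc |u (2 * π * (2:ℝ) ^ k * x) - u (2 * π * 2 ^ k * y)|
        ≤ |2 * π * (2:ℝ) ^ k * x - 2 * π * 2 ^ k * y| := hlip _ _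
      _ = |2 * π * (2:ℝ) ^ k * (x - y)| := by ring_nf
      _ = 2 * π * 2 ^ k * δ := by
          rw [abs_mul, abs_of_nonneg (by positivity : (0:ℝ) ≤ 2 * π * 2 ^ k)]
  have hnorm : Summable (fun m : ℕ => ‖a m‖) := by
    apply Summable.congr (summable_term hr0.le hr1 hN i
      (fun m => |u (2 * π * 2 ^ (i + m * N) * x) - u (2 * π * 2 ^ (i + m * N) * y)|)
      (fun m => by
        rw [abs_abs]
        exact hdiff2 _))
    intro m
    rw [ha_def, norm_mul, Real.norm_eq_abs, Real.norm_eq_abs,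
      abs_of_nonneg (by positivity : (0:ℝ) ≤ r ^ (i + m * N))]
  set g : ℕ → ℝ := fun k => r ^ k * min 2 (2 * π * 2 ^ k * δ) with hg_def
  have hgnn : ∀ k, 0 ≤ g k := by
    intro k
    apply mul_nonneg (by positivity)
    exact le_min (by norm_num) (by positivity)
  have hg : Summable g := by
    apply Summable.of_norm_bounded (g := fun k => 2 * r ^ k)
      ((summable_geometric_of_lt_one hr0.le hr1).mul_left 2)
    intro k
    rw [Real.norm_eq_abs, abs_of_nonneg (hgnn k)]
    calc g k ≤ r ^ k * 2 := by
          apply mul_le_mul_of_nonneg_left (min_le_left _ _) (by positivity)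
      _ = 2 * r ^ k := by ring
  have hcomp : ∑' m : ℕ, ‖a m‖ ≤ ∑' k : ℕ, g k := by
    apply Summable.tsum_le_tsum_of_inj (fun m => i + m * N)
    · intro p q hpq
      have := Nat.add_left_cancel hpq
      exact Nat.eq_of_mul_eq_mul_right (Nat.pos_of_ne_zero hN) this
    · intro c _
      exact hgnn c
    · intro m
      rw [ha_def, norm_mul, Real.norm_eq_abs, Real.norm_eq_abs,
        abs_of_nonneg (by positivity : (0:ℝ) ≤ r ^ (i + m * N)), hg_def]
      exact mul_le_mul_of_nonneg_left (le_min (hdiff2 _) (hdifflip _)) (by positivity)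
    · exact hnorm
    · exact hg
  calc |∑' m : ℕ, a m| ≤ ∑' m : ℕ, ‖a m‖ := by
        rw [← Real.norm_eq_abs]
        exact norm_tsum_le_tsum_norm hnorm
    _ ≤ ∑' k : ℕ, g k := hcomp
    _ ≤ (8 * π * r / (2*r - 1) + 4 / (1 - r)) * δ ^ α :=
        upper_sum hα hα1 hr hδ0 hδ1

end Stmt18Aux

set_option maxHeartbeats 1000000 in
open Stmt18Aux in
theorem stmt_18 (α : ℝ) (hα : 0 < α) (hα1 : α < 1) :
    ∃ (d : ℕ) (Φ : ℝ → (Fin d → ℝ)) (c₁ c₂ : ℝ), 0 < c₁ ∧ 0 < c₂ ∧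
      ∀ x ∈ Icc (0:ℝ) 1, ∀ y ∈ Icc (0:ℝ) 1,
        c₁ * |x - y| ^ α ≤ ‖Φ x - Φ y‖ ∧ ‖Φ x - Φ y‖ ≤ c₂ * |x - y| ^ α := by
  classical
  have hπ := Real.pi_pos
  set r := (2:ℝ) ^ (-α) with hr
  obtain ⟨hr0, hr1, hhalf⟩ := basic_r hα hα1
  rw [← hr] at hr0 hr1 hhalf
  -- choose N
  obtain ⟨N₁, hN₁⟩ := exists_pow_lt_of_lt_one (show (0:ℝ) < 1/100 by norm_num) hr1
  have h2r : (1:ℝ) < 2 * r := by linarith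
  have h2rpos : (0:ℝ) < 2 * r := by linarith
  obtain ⟨N₂, hN₂⟩ := exists_pow_lt_of_lt_one (show (0:ℝ) < 1/100 by norm_num)
    (inv_lt_one_of_one_lt₀ h2r)
  set N := N₁ + N₂ + 1 with hNdef
  have hN : N ≠ 0 := by omega
  have hrN : r ^ N ≤ 1/100 := by
    calc r ^ N ≤ r ^ N₁ := pow_le_pow_of_le_one hr0.le hr1.le (by omega)
      _ ≤ 1/100 := hN₁.le
  have h2rN : (100:ℝ) ≤ (2*r) ^ N := by
    have hN₂' : (100:ℝ) < (2*r) ^ N₂ := by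
      rw [inv_pow, inv_lt_comm₀ (by positivity) (by norm_num)] at hN₂
      calc (100:ℝ) = (1/100)⁻¹ := by norm_num
        _ < (2*r) ^ N₂ := hN₂
    calc (100:ℝ) ≤ (2*r) ^ N₂ := hN₂'.le
      _ ≤ (2*r) ^ N := pow_le_pow_right₀ h2r.le (by omega)
  set C := 8 * π * r / (2*r - 1) + 4 / (1 - r) with hC
  have hC0 : 0 < C := by
    apply add_pos
    · apply div_pos (by positivity) (by linarith)
    · apply div_pos (by norm_num) (by linarith)
  refine ⟨2*N+1,
    (fun x j => if (j:ℕ) < N then S r N (j:ℕ) Real.cos x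
      else if (j:ℕ) < 2*N then S r N ((j:ℕ) - N) Real.sin x else x),
    1/2, C+1, by norm_num, by linarith, ?_⟩
  intro x hx y hy
  set Φ : ℝ → Fin (2*N+1) → ℝ :=
    (fun x j => if (j:ℕ) < N then S r N (j:ℕ) Real.cos x
      else if (j:ℕ) < 2*N then S r N ((j:ℕ) - N) Real.sin x else x) with hΦ
  by_cases hδ0 : |x - y| = 0
  · have hxy : x = y := by
      have := abs_eq_zero.1 hδ0
      linarith [sub_eq_zero.1 this]
    rw [hδ0, Real.zero_rpow hα.ne', hxy, sub_self, norm_zero]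
    norm_num
  · have hδpos : 0 < |x - y| := (abs_nonneg _).lt_of_ne (Ne.symm hδ0)
    have hδ1 : |x - y| ≤ 1 := by
      rw [abs_le]
      constructor <;> [linarith [hx.1, hy.2]; linarith [hx.2, hy.1]]
    have hδαpos : 0 < |x - y| ^ α := Real.rpow_pos_of_pos hδpos α
    constructor
    · -- lower bound
      by_cases hbig : 1/2 < |x - y|
      · -- use the linear coordinate
        have hj := norm_le_pi_norm (Φ x - Φ y) ⟨2*N, by omega⟩
        have he : ∀ z : ℝ, Φ z (⟨2*N, by omega⟩ : Fin (2*N+1)) = z := by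
          intro z
          show (if 2*N < N then S r N (2*N) Real.cos z
            else if 2*N < 2*N then S r N (2*N - N) Real.sin z else z) = z
          rw [if_neg (by omega), if_neg (by omega)]
        have hev : (Φ x - Φ y) (⟨2*N, by omega⟩ : Fin (2*N+1)) = x - y := by
          rw [Pi.sub_apply, he, he]
        rw [hev, Real.norm_eq_abs] at hj
        have hδα1 : |x - y| ^ α ≤ 1 := Real.rpow_le_one hδpos.le hδ1 hα.le
        linarith
      · -- use a trigonometric coordinate
        push_neg at hbig
        obtain ⟨n, hn1, hn2⟩ := exists_nat_pow_near
          (show (1:ℝ) ≤ 1/(2*|x - y|) by rw [le_div_iff₀ (by linarith)]; linarith)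
          one_lt_two
        have h2n : (0:ℝ) < 2 ^ n := by positivity
        have hθ2 : 2 ^ n * |x - y| ≤ 1/2 := by
          rw [le_div_iff₀ (by linarith)] at hn1
          nlinarith
        have hθ1 : 1/4 < 2 ^ n * |x - y| := by
          rw [div_lt_iff₀ (by linarith)] at hn2
          have : (2:ℝ) ^ (n+1) = 2 * 2^n := by rw [pow_succ]; ring
          nlinarith
        have hδαrn : |x - y| ^ α ≤ r ^ n := by
          have hd : |x - y| ≤ ((2:ℝ)^n)⁻¹ := by
            rw [← one_div, le_div_iff₀ h2n]
            nlinarith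
          calc |x - y| ^ α ≤ (((2:ℝ)^n)⁻¹) ^ α :=
                Real.rpow_le_rpow hδpos.le hd hα.le
            _ = r ^ n := by rw [hr]; exact (rpow_pow_eq α n).symm
        set i := n % N with hi
        set m₀ := n / N with hm₀
        have hn_eq : n = i + m₀ * N := (Nat.mod_add_div' n N).symm
        have hiN : i < N := Nat.mod_lt _ (Nat.pos_of_ne_zero hN)
        have hi2 : i < 2*N+1 := lt_of_lt_of_le hiN (by omega)
        have hNi2 : N + i < 2*N+1 := lt_of_lt_of_le (Nat.add_lt_add_left hiN N) (by omega)
        have hc1 : ¬(N + i < N) := Nat.not_lt.2 (Nat.le_add_right N i)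
        have hc2 : N + i < 2*N := by rw [two_mul]; exact Nat.add_lt_add_left hiN N
        rcases trig_main n hθ1 hθ2 with hm | hm
        · have hcl := coord_lower hr0 hr1 hN hrN h2rN i m₀ n hn_eq Real.cos
            (fun t => Real.abs_cos_le_one t) (trig_lip Real.cos (Or.inl rfl)) x y hθ2 hm
          have hj := norm_le_pi_norm (Φ x - Φ y) ⟨i, hi2⟩
          have he : ∀ z : ℝ, Φ z (⟨i, hi2⟩ : Fin (2*N+1)) = S r N i Real.cos z := by
            intro z
            show (if i < N then S r N i Real.cos z
              else if i < 2*N then S r N (i - N) Real.sin z else z) = S r N i Real.cos z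
            rw [if_pos hiN]
          have hev : (Φ x - Φ y) (⟨i, hi2⟩ : Fin (2*N+1))
              = S r N i Real.cos x - S r N i Real.cos y := by
            rw [Pi.sub_apply, he, he]
          rw [hev, Real.norm_eq_abs] at hj
          calc 1/2 * |x - y| ^ α ≤ r ^ n / 2 := by linarith
            _ ≤ |S r N i Real.cos x - S r N i Real.cos y| := hcl
            _ ≤ ‖Φ x - Φ y‖ := hj
        · have hcl := coord_lower hr0 hr1 hN hrN h2rN i m₀ n hn_eq Real.sin
            (fun t => Real.abs_sin_le_one t) (trig_lip Real.sin (Or.inr rfl)) x y hθ2 hm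
          have hj := norm_le_pi_norm (Φ x - Φ y) ⟨N + i, hNi2⟩
          have he : ∀ z : ℝ, Φ z (⟨N + i, hNi2⟩ : Fin (2*N+1)) = S r N i Real.sin z := by
            intro z
            show (if N + i < N then S r N (N + i) Real.cos z
              else if N + i < 2*N then S r N (N + i - N) Real.sin z else z) = S r N i Real.sin z
            rw [if_neg hc1, if_pos hc2, Nat.add_sub_cancel_left]
          have hev : (Φ x - Φ y) (⟨N + i, hNi2⟩ : Fin (2*N+1))
              = S r N i Real.sin x - S r N i Real.sin y := by
            rw [Pi.sub_apply, he, he]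
          rw [hev, Real.norm_eq_abs] at hj
          calc 1/2 * |x - y| ^ α ≤ r ^ n / 2 := by linarith
            _ ≤ |S r N i Real.sin x - S r N i Real.sin y| := hcl
            _ ≤ ‖Φ x - Φ y‖ := hj
    · -- upper bound
      apply (pi_norm_le_iff_of_nonneg (by positivity)).2
      intro j
      rw [Pi.sub_apply, Real.norm_eq_abs]
      by_cases hj1 : (j:ℕ) < N
      · have he : ∀ z : ℝ, Φ z j = S r N (j:ℕ) Real.cos z := by
          intro z
          show (if (j:ℕ) < N then S r N (j:ℕ) Real.cos z
            else if (j:ℕ) < 2*N then S r N ((j:ℕ) - N) Real.sin z else z)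
            = S r N (j:ℕ) Real.cos z
          rw [if_pos hj1]
        rw [he, he]
        calc |S r N (j:ℕ) Real.cos x - S r N (j:ℕ) Real.cos y|
            ≤ C * |x - y| ^ α := coord_upper hα hα1 hr hN (j:ℕ) Real.cos
              (fun t => Real.abs_cos_le_one t) (trig_lip Real.cos (Or.inl rfl)) x y hδpos hδ1
          _ ≤ (C+1) * |x - y| ^ α := by nlinarith
      · by_cases hj2 : (j:ℕ) < 2*N
        · have he : ∀ z : ℝ, Φ z j = S r N ((j:ℕ) - N) Real.sin z := by
            intro z
            show (if (j:ℕ) < N then S r N (j:ℕ) Real.cos z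
              else if (j:ℕ) < 2*N then S r N ((j:ℕ) - N) Real.sin z else z)
              = S r N ((j:ℕ) - N) Real.sin z
            rw [if_neg hj1, if_pos hj2]
          rw [he, he]
          calc |S r N ((j:ℕ) - N) Real.sin x - S r N ((j:ℕ) - N) Real.sin y|
              ≤ C * |x - y| ^ α := coord_upper hα hα1 hr hN ((j:ℕ) - N) Real.sin
                (fun t => Real.abs_sin_le_one t) (trig_lip Real.sin (Or.inr rfl)) x y hδpos hδ1
            _ ≤ (C+1) * |x - y| ^ α := by nlinarith
        · have he : ∀ z : ℝ, Φ z j = z := by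
            intro z
            show (if (j:ℕ) < N then S r N (j:ℕ) Real.cos z
              else if (j:ℕ) < 2*N then S r N ((j:ℕ) - N) Real.sin z else z) = z
            rw [if_neg hj1, if_neg hj2]
          rw [he, he]
          calc |x - y| ≤ |x - y| ^ α := by
                have := Real.rpow_le_rpow_of_exponent_ge hδpos hδ1 hα1.le
                rwa [Real.rpow_one] at this
            _ ≤ (C+1) * |x - y| ^ α := by nlinarith
end
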